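/- arXiv:2202.09702 — 4 statements merged into one kernel-verified Lean document; each statement's English description precedes it below -/
import Mathlib

section
/- Let m ≥ 2, C ∈ ℝ, and let R be an algebraic curvature tensor on ℝ^m. Assume that for every collection {π_1, …, π_{⌊m/2⌋}} of mutually orthogonal 2-dimensional subspaces of ℝ^m one has (1/⌊m/2⌋) Σ_{i=1}^{⌊m/2⌋} Sect(π_i) ≥ C. Then for every symmetric traceless matrix Z on ℝ^m one has ⟨ΓZ, Z⟩ ≥ 2m·C·|Z|², where Γ is the Lichnerowicz operator (acting on 2-covariant tensors) associated to R. -/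
open Finset

namespace Paper

noncomputable section

variable {m : ℕ}

/-- Kronecker delta. -/
def delta (i j : Fin m) : ℝ := if i = j then 1 else 0

/-- `T` is an algebraic curvature tensor: antisymmetry in the first pair, pair symmetry,
and the first Bianchi identity. -/
def IsACT (T : Fin m → Fin m → Fin m → Fin m → ℝ) : Prop :=
  (∀ i j k t, T i j k t = - T j i k t) ∧
  (∀ i j k t, T i j k t = T k t i j) ∧
  (∀ i j k t, T i j k t + T i t j k + T i k t j = 0)

/-- Ricci contraction `(E_T)_{ij} = Σ_k T_{kikj}`. -/
def ric (T : Fin m → Fin m → Fin m → Fin m → ℝ) (i j : Fin m) : ℝ := ∑ k, T k i k j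

/-- Total trace `S_T`. -/
def traceS (T : Fin m → Fin m → Fin m → Fin m → ℝ) : ℝ := ∑ i, ric T i i

def inner2 (A B : Fin m → Fin m → ℝ) : ℝ := ∑ i, ∑ j, A i j * B i j

def inner4 (A B : Fin m → Fin m → Fin m → Fin m → ℝ) : ℝ :=
  ∑ i, ∑ j, ∑ k, ∑ t, A i j k t * B i j k t

def inner6 (A B : Fin m → Fin m → Fin m → Fin m → Fin m → Fin m → ℝ) : ℝ :=
  ∑ i, ∑ j, ∑ k, ∑ t, ∑ s, ∑ r, A i j k t s r * B i j k t s r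

/-- Lichnerowicz operator `Γ` associated to `R`, acting on 2-covariant tensors. -/
def gamma2 (R : Fin m → Fin m → Fin m → Fin m → ℝ) (Q : Fin m → Fin m → ℝ)
    (i j : Fin m) : ℝ :=
  (∑ s, ric R i s * Q s j) + (∑ s, ric R j s * Q i s)
    - ∑ s, ∑ t, (R i s j t * Q s t + R j s i t * Q t s)

/-- Lichnerowicz operator `Γ` associated to `R`, acting on 4-covariant tensors. -/
def gamma4 (R Q : Fin m → Fin m → Fin m → Fin m → ℝ) (i j k w : Fin m) : ℝ :=
  (∑ s, ric R i s * Q s j k w) + (∑ s, ric R j s * Q i s k w) +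
  (∑ s, ric R k s * Q i j s w) + (∑ s, ric R w s * Q i j k s)
  - ∑ s, ∑ t,
      (R i s j t * Q s t k w + R i s k t * Q s j t w + R i s w t * Q s j k t +
       R j s i t * Q t s k w + R j s k t * Q i s t w + R j s w t * Q i s k t +
       R k s i t * Q t j s w + R k s j t * Q i t s w + R k s w t * Q i j s t +
       R w s i t * Q t j k s + R w s j t * Q i t k s + R w s k t * Q i j t s)

/-- Kulkarni–Nomizu product of symmetric matrices. -/
def kn (A B : Fin m → Fin m → ℝ) (i j k t : Fin m) : ℝ :=
  A i k * B j t + A j t * B i k - A i t * B j k - A j k * B i t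

/-- Traceless part of a matrix. -/
def Zmat (E : Fin m → Fin m → ℝ) (i j : Fin m) : ℝ :=
  E i j - ((∑ k, E k k) / (m : ℝ)) * delta i j

/-- Traceless part `Z_T` of the Ricci contraction of `T`. -/
def Zpart (T : Fin m → Fin m → Fin m → Fin m → ℝ) (i j : Fin m) : ℝ :=
  ric T i j - (traceS T / (m : ℝ)) * delta i j

/-- Schouten-type tensor `A_T`. -/
def Apart (T : Fin m → Fin m → Fin m → Fin m → ℝ) (i j : Fin m) : ℝ :=
  ric T i j - (traceS T / (2 * ((m : ℝ) - 1))) * delta i j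

/-- Weyl part `W_T = T - (1/(m-2)) A_T ⊙ δ`. -/
def Wpart (T : Fin m → Fin m → Fin m → Fin m → ℝ) (i j k t : Fin m) : ℝ :=
  T i j k t - (1 / ((m : ℝ) - 2)) * kn (Apart T) delta i j k t

/-- Pseudo-projective tensor `P_T`. -/
def pproj (T : Fin m → Fin m → Fin m → Fin m → ℝ) (i j k t : Fin m) : ℝ :=
  T i j k t - (1 / ((m : ℝ) - 1)) * (delta i k * ric T j t - delta i t * ric T j k)

/-- The 6-covariant tensor `T̂` associated to a 4-covariant tensor `T`. -/
def hat4 (T : Fin m → Fin m → Fin m → Fin m → ℝ) (i j k t s r : Fin m) : ℝ :=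
  (1 / 2) * (T s j k t * delta i r + T i s k t * delta j r + T i j s t * delta k r +
             T i j k s * delta t r - T r j k t * delta i s - T i r k t * delta j s -
             T i j r t * delta k s - T i j k r * delta t s)

/-- Sectional curvature of the plane spanned by `X, Y`. -/
def sect (R : Fin m → Fin m → Fin m → Fin m → ℝ) (X Y : Fin m → ℝ) : ℝ :=
  (∑ i, ∑ j, ∑ k, ∑ t, R i j k t * X i * Y j * X k * Y t) /
    ((∑ i, X i * X i) * (∑ i, Y i * Y i) - (∑ i, X i * Y i) ^ 2)

/-- Decomposable 2-form associated to the pair `(X, Y)`. -/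
def dform (X Y : Fin m → ℝ) (i j : Fin m) : ℝ := (X i * Y j - X j * Y i) / 2

/-- A full spectral decomposition of the curvature operator `𝔯` on `Λ²` induced by `R`:
`ω` is an orthonormal family of antisymmetric eigen-2-forms (of cardinality `dim Λ² = m(m-1)/2`,
hence an orthonormal eigenbasis) with nondecreasing eigenvalues `lam`. -/
def SpectralData (R : Fin m → Fin m → Fin m → Fin m → ℝ)
    (lam : Fin (m * (m - 1) / 2) → ℝ) (ω : Fin (m * (m - 1) / 2) → Fin m → Fin m → ℝ) :
    Prop :=
  (∀ α i j, ω α i j = - ω α j i) ∧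
  (∀ α β, inner2 (ω α) (ω β) = if α = β then 1 else 0) ∧
  (∀ α k t, (∑ i, ∑ j, R i j k t * ω α i j) = lam α * ω α k t) ∧
  Monotone lam

/-- `𝔯^(k)`: the average of the `k` smallest eigenvalues. -/
def partialAvg {N : ℕ} (lam : Fin N → ℝ) (k : ℕ) : ℝ :=
  (∑ α ∈ Finset.univ.filter (fun α : Fin N => (α : ℕ) < k), lam α) / (k : ℝ)


lemma key_comb {ι : Type*} [Fintype ι] [DecidableEq ι] (n : ℕ) (hn : 0 < n)
    (hcard : n ≤ Fintype.card ι) (g c : ι → ℝ) (hc0 : ∀ e, 0 ≤ c e)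
    (hcT : ∀ e, c e * n ≤ ∑ x, c x)
    (hg : ∀ S : Finset ι, S.card = n → 0 ≤ ∑ e ∈ S, g e) :
    0 ≤ ∑ e, g e * c e := by
  set T : ℝ := (∑ x, c x) / n with hT
  have hnR : (0:ℝ) < n := by exact_mod_cast hn
  have hcT' : ∀ e, c e ≤ T := fun e => (le_div_iff₀ hnR).mpr (hcT e)
  have hTsum : (n:ℝ) * T = ∑ x, c x := by rw [hT]; field_simp
  have hT0 : 0 ≤ T := div_nonneg (Finset.sum_nonneg fun e _ => hc0 e) hnR.le
  -- minimizing n-subset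
  have h𝒮 : (Finset.univ.powersetCard n : Finset (Finset ι)).Nonempty := by
    rw [Finset.powersetCard_nonempty]
    simpa using hcard
  obtain ⟨S₀, hS₀mem, hS₀min⟩ :=
    Finset.exists_min_image (Finset.univ.powersetCard n) (fun S => ∑ e ∈ S, g e) h𝒮
  have hS₀card : S₀.card = n := (Finset.mem_powersetCard.mp hS₀mem).2
  have hS₀ne : S₀.Nonempty := Finset.card_pos.mp (hS₀card ▸ hn)
  have hswap : ∀ f ∈ S₀, ∀ e, e ∉ S₀ → g f ≤ g e := by
    intro f hf e he
    have hnotmem : e ∉ S₀.erase f := fun h => he (Finset.mem_of_mem_erase h)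
    have hcard' : (insert e (S₀.erase f)).card = n := by
      rw [Finset.card_insert_of_notMem hnotmem, Finset.card_erase_of_mem hf, hS₀card,
        Nat.sub_add_cancel hn]
    have hmem' : insert e (S₀.erase f) ∈ Finset.univ.powersetCard n := by
      rw [Finset.mem_powersetCard]
      exact ⟨Finset.subset_univ _, hcard'⟩
    have := hS₀min _ hmem'
    rw [Finset.sum_insert hnotmem, Finset.sum_erase_eq_sub hf] at this
    linarith
  obtain ⟨f₀, hf₀, hf₀max⟩ := Finset.exists_max_image S₀ g hS₀ne
  set M := g f₀ with hM
  have h1 : ∑ e ∈ S₀ᶜ, g e * c e ≥ M * ∑ e ∈ S₀ᶜ, c e := by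
    rw [Finset.mul_sum]
    apply Finset.sum_le_sum
    intro e he
    have he' : e ∉ S₀ := by simpa using he
    exact mul_le_mul_of_nonneg_right (hswap f₀ hf₀ e he') (hc0 e)
  have h2 : M * ∑ e ∈ S₀ᶜ, c e = M * ∑ e ∈ S₀, (T - c e) := by
    congr 1
    have := Finset.sum_add_sum_compl S₀ c
    rw [Finset.sum_sub_distrib, Finset.sum_const, hS₀card, nsmul_eq_mul, hTsum]
    linarith
  have h3 : ∑ e ∈ S₀, g e * (T - c e) ≤ M * ∑ e ∈ S₀, (T - c e) := by
    rw [Finset.mul_sum]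
    apply Finset.sum_le_sum
    intro e he
    exact mul_le_mul_of_nonneg_right (hf₀max e he) (by linarith [hcT' e])
  have h4 : 0 ≤ T * ∑ e ∈ S₀, g e := mul_nonneg hT0 (hg S₀ hS₀card)
  have h5 : ∑ e ∈ S₀, g e * c e + ∑ e ∈ S₀, g e * (T - c e) = T * ∑ e ∈ S₀, g e := by
    rw [← Finset.sum_add_distrib, Finset.mul_sum]
    exact Finset.sum_congr rfl fun e _ => by ring
  have := Finset.sum_add_sum_compl S₀ (fun e => g e * c e)
  linarith

lemma spectral {m : ℕ} (Z : Fin m → Fin m → ℝ) (hZsym : ∀ i j, Z i j = Z j i) :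
    ∃ (lam : Fin m → ℝ) (u : Fin m → Fin m → ℝ),
      (∀ i j, Z i j = ∑ a, lam a * u a i * u a j) ∧
      (∀ a b, ∑ k, u a k * u b k = (if a = b then (1:ℝ) else 0)) ∧
      (∀ i j, ∑ a, u a i * u a j = (if i = j then (1:ℝ) else 0)) := by
  set M : Matrix (Fin m) (Fin m) ℝ := Matrix.of Z with hMdef
  have hM : M.IsHermitian := by
    ext i j
    simp [Matrix.conjTranspose_apply, hMdef, hZsym i j]
  set V : Matrix (Fin m) (Fin m) ℝ := (hM.eigenvectorUnitary : Matrix (Fin m) (Fin m) ℝ)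
    with hV
  refine ⟨hM.eigenvalues, fun a i => V i a, ?_, ?_, ?_⟩
  · intro i j
    have hst := hM.spectral_theorem
    have : M i j = _ := congrFun (congrFun hst i) j
    rw [Unitary.conjStarAlgAut_apply, Matrix.mul_apply] at this
    simp only [Matrix.mul_diagonal, Matrix.star_apply, star_trivial] at this
    calc Z i j = M i j := rfl
    _ = _ := by
        rw [this]
        apply Finset.sum_congr rfl
        intro a _
        simp only [Function.comp_apply, hV, RCLike.ofReal_real_eq_id, id_eq]
        ring
  · intro a b
    have h1 : (star V * V) a b = (1 : Matrix (Fin m) (Fin m) ℝ) a b := by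
      rw [Matrix.mem_unitaryGroup_iff'.mp hM.eigenvectorUnitary.2]
    rw [Matrix.mul_apply] at h1
    simp only [Matrix.star_apply, star_trivial, Matrix.one_apply] at h1
    rw [← h1]
  · intro i j
    have h1 : (V * star V) i j = (1 : Matrix (Fin m) (Fin m) ℝ) i j := by
      rw [Matrix.mem_unitaryGroup_iff.mp hM.eigenvectorUnitary.2]
    rw [Matrix.mul_apply] at h1
    simp only [Matrix.star_apply, star_trivial, Matrix.one_apply] at h1
    rw [← h1]

lemma pull3 (f : Fin m → Fin m → Fin m → ℝ) :
    ∑ a, ∑ b, ∑ c, f a b c = ∑ c, ∑ a, ∑ b, f a b c :=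
  (Finset.sum_congr rfl fun _ _ => Finset.sum_comm).trans Finset.sum_comm

lemma pull4 (f : Fin m → Fin m → Fin m → Fin m → ℝ) :
    ∑ a, ∑ b, ∑ c, ∑ d, f a b c d = ∑ d, ∑ a, ∑ b, ∑ c, f a b c d :=
  (Finset.sum_congr rfl fun a _ => pull3 (f a)).trans Finset.sum_comm

lemma pull5 (f : Fin m → Fin m → Fin m → Fin m → Fin m → ℝ) :
    ∑ a, ∑ b, ∑ c, ∑ d, ∑ e, f a b c d e = ∑ e, ∑ a, ∑ b, ∑ c, ∑ d, f a b c d e :=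
  (Finset.sum_congr rfl fun a _ => pull4 (f a)).trans Finset.sum_comm

section
variable (R : Fin m → Fin m → Fin m → Fin m → ℝ) (Z : Fin m → Fin m → ℝ)
  (lam : Fin m → ℝ) (u : Fin m → Fin m → ℝ)

/-- transformed sectional-curvature-like quantity -/
def Kf (a b : Fin m) : ℝ :=
  ∑ i, ∑ j, ∑ k, ∑ t, R i j k t * u a i * u b j * u a k * u b t

variable (hZ : ∀ i j, Z i j = ∑ a, lam a * u a i * u a j)
  (horto : ∀ a b, ∑ k, u a k * u b k = (if a = b then (1:ℝ) else 0))
  (hcomp : ∀ i j, ∑ a, u a i * u a j = (if i = j then (1:ℝ) else 0))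

include hZ horto in
lemma Zu (a : Fin m) (s : Fin m) : ∑ j, Z s j * u a j = lam a * u a s := by
  calc ∑ j, Z s j * u a j = ∑ j, ∑ b, lam b * u b s * (u b j * u a j) := by
        simp only [hZ, Finset.sum_mul]
        exact Finset.sum_congr rfl fun j _ => Finset.sum_congr rfl fun b _ => by ring
    _ = ∑ b, lam b * u b s * ∑ j, u b j * u a j := by
        rw [Finset.sum_comm]
        exact Finset.sum_congr rfl fun b _ => (Finset.mul_sum _ _ _).symm
    _ = ∑ b, lam b * u b s * (if b = a then 1 else 0) := by
        simp only [horto]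
    _ = lam a * u a s := by simp

include hZ horto in
lemma norm_eq : (∑ i, ∑ j, Z i j * Z i j) = ∑ a, lam a ^ 2 := by
  have h1 : ∀ i, ∑ j, Z i j * Z i j = ∑ a, lam a ^ 2 * (u a i * u a i) := by
    intro i
    calc ∑ j, Z i j * Z i j = ∑ j, ∑ a, lam a * u a i * (Z i j * u a j) := by
          refine Finset.sum_congr rfl fun j _ => ?_
          nth_rewrite 1 [hZ i j]
          rw [Finset.sum_mul]
          exact Finset.sum_congr rfl fun a _ => by ring
      _ = ∑ a, lam a * u a i * ∑ j, Z i j * u a j := by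
          rw [Finset.sum_comm]
          exact Finset.sum_congr rfl fun a _ => (Finset.mul_sum _ _ _).symm
      _ = ∑ a, lam a ^ 2 * (u a i * u a i) := by
          refine Finset.sum_congr rfl fun a _ => ?_
          rw [Zu Z lam u hZ horto a i]
          ring
  calc ∑ i, ∑ j, Z i j * Z i j = ∑ i, ∑ a, lam a ^ 2 * (u a i * u a i) :=
        Finset.sum_congr rfl fun i _ => h1 i
    _ = ∑ a, lam a ^ 2 * ∑ i, u a i * u a i := by
        rw [Finset.sum_comm]
        exact Finset.sum_congr rfl fun a _ => (Finset.mul_sum _ _ _).symm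
    _ = ∑ a, lam a ^ 2 := by simp [horto]

include hZ horto in
lemma trace_eq : (∑ i, Z i i) = ∑ a, lam a := by
  calc ∑ i, Z i i = ∑ i, ∑ a, lam a * (u a i * u a i) := by
        simp only [hZ]
        exact Finset.sum_congr rfl fun i _ => Finset.sum_congr rfl fun a _ => by ring
    _ = ∑ a, lam a * ∑ i, u a i * u a i := by
        rw [Finset.sum_comm]
        exact Finset.sum_congr rfl fun a _ => (Finset.mul_sum _ _ _).symm
    _ = ∑ a, lam a := by simp [horto]

include hZ horto in
lemma ZZu (i s : Fin m) : ∑ j, Z s j * Z i j = ∑ a, lam a ^ 2 * (u a i * u a s) := by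
  calc ∑ j, Z s j * Z i j = ∑ j, ∑ a, lam a * u a i * (Z s j * u a j) := by
        refine Finset.sum_congr rfl fun j _ => ?_
        rw [hZ i j]
        rw [Finset.mul_sum]
        exact Finset.sum_congr rfl fun a _ => by ring
    _ = ∑ a, lam a * u a i * ∑ j, Z s j * u a j := by
        rw [Finset.sum_comm]
        exact Finset.sum_congr rfl fun a _ => (Finset.mul_sum _ _ _).symm
    _ = ∑ a, lam a ^ 2 * (u a i * u a s) := by
        refine Finset.sum_congr rfl fun a _ => ?_
        rw [Zu Z lam u hZ horto a s]
        ring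

include hZ in
lemma sub1 (W : Fin m → Fin m → ℝ) :
    ∑ i, ∑ j, W i j * Z i j = ∑ b, lam b * ∑ i, ∑ j, W i j * (u b i * u b j) := by
  calc ∑ i, ∑ j, W i j * Z i j = ∑ i, ∑ j, ∑ b, lam b * (W i j * (u b i * u b j)) := by
        refine Finset.sum_congr rfl fun i _ => Finset.sum_congr rfl fun j _ => ?_
        rw [hZ i j, Finset.mul_sum]
        exact Finset.sum_congr rfl fun b _ => by ring
    _ = ∑ b, ∑ i, ∑ j, lam b * (W i j * (u b i * u b j)) := pull3 _
    _ = ∑ b, lam b * ∑ i, ∑ j, W i j * (u b i * u b j) := by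
        refine Finset.sum_congr rfl fun b _ => ?_
        rw [Finset.mul_sum]
        exact Finset.sum_congr rfl fun i _ => (Finset.mul_sum _ _ _).symm

include hZ horto in
lemma P1 : ∑ i, ∑ j, (∑ s, ric R i s * Z s j) * Z i j
    = ∑ a, lam a ^ 2 * (∑ i, ∑ s, ric R i s * (u a i * u a s)) := by
  calc ∑ i, ∑ j, (∑ s, ric R i s * Z s j) * Z i j
      = ∑ i, ∑ j, ∑ s, ric R i s * (Z s j * Z i j) := by
        refine Finset.sum_congr rfl fun i _ => Finset.sum_congr rfl fun j _ => ?_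
        rw [Finset.sum_mul]
        exact Finset.sum_congr rfl fun s _ => by ring
    _ = ∑ i, ∑ s, ∑ j, ric R i s * (Z s j * Z i j) :=
        Finset.sum_congr rfl fun i _ => Finset.sum_comm
    _ = ∑ i, ∑ s, ric R i s * ∑ a, lam a ^ 2 * (u a i * u a s) := by
        refine Finset.sum_congr rfl fun i _ => Finset.sum_congr rfl fun s _ => ?_
        rw [← Finset.mul_sum, ZZu Z lam u hZ horto i s]
    _ = ∑ i, ∑ s, ∑ a, lam a ^ 2 * (ric R i s * (u a i * u a s)) := by
        refine Finset.sum_congr rfl fun i _ => Finset.sum_congr rfl fun s _ => ?_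
        rw [Finset.mul_sum]
        exact Finset.sum_congr rfl fun a _ => by ring
    _ = ∑ a, ∑ i, ∑ s, lam a ^ 2 * (ric R i s * (u a i * u a s)) := pull3 _
    _ = ∑ a, lam a ^ 2 * (∑ i, ∑ s, ric R i s * (u a i * u a s)) := by
        refine Finset.sum_congr rfl fun a _ => ?_
        rw [Finset.mul_sum]
        exact Finset.sum_congr rfl fun i _ => (Finset.mul_sum _ _ _).symm

include hZ horto in
lemma P2 : ∑ i, ∑ j, (∑ s, ric R j s * Z i s) * Z i j
    = ∑ a, lam a ^ 2 * (∑ i, ∑ s, ric R i s * (u a i * u a s)) := by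
  have hZsym : ∀ i j, Z i j = Z j i := by
    intro i j; rw [hZ, hZ]; exact Finset.sum_congr rfl fun a _ => by ring
  calc ∑ i, ∑ j, (∑ s, ric R j s * Z i s) * Z i j
      = ∑ i, ∑ j, ∑ s, ric R j s * (Z s i * Z j i) := by
        refine Finset.sum_congr rfl fun i _ => Finset.sum_congr rfl fun j _ => ?_
        rw [Finset.sum_mul]
        refine Finset.sum_congr rfl fun s _ => ?_
        rw [hZsym i s, hZsym i j]; ring
    _ = ∑ j, ∑ s, ∑ i, ric R j s * (Z s i * Z j i) := by
        exact (pull3 _).trans (pull3 _)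
    _ = ∑ j, ∑ s, ric R j s * ∑ i, Z s i * Z j i := by
        refine Finset.sum_congr rfl fun j _ => Finset.sum_congr rfl fun s _ =>
          (Finset.mul_sum _ _ _).symm
    _ = ∑ j, ∑ s, ric R j s * ∑ a, lam a ^ 2 * (u a j * u a s) := by
        refine Finset.sum_congr rfl fun j _ => Finset.sum_congr rfl fun s _ => ?_
        rw [ZZu Z lam u hZ horto j s]
    _ = ∑ j, ∑ s, ∑ a, lam a ^ 2 * (ric R j s * (u a j * u a s)) := by
        refine Finset.sum_congr rfl fun j _ => Finset.sum_congr rfl fun s _ => ?_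
        rw [Finset.mul_sum]
        exact Finset.sum_congr rfl fun a _ => by ring
    _ = ∑ a, ∑ j, ∑ s, lam a ^ 2 * (ric R j s * (u a j * u a s)) := pull3 _
    _ = ∑ a, lam a ^ 2 * (∑ i, ∑ s, ric R i s * (u a i * u a s)) := by
        refine Finset.sum_congr rfl fun a _ => ?_
        rw [Finset.mul_sum]
        exact Finset.sum_congr rfl fun i _ => (Finset.mul_sum _ _ _).symm

include hcomp in
lemma sumK (a : Fin m) :
    ∑ b, Kf R u b a = ∑ i, ∑ s, ric R i s * (u a i * u a s) := by
  calc ∑ b, Kf R u b a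
      = ∑ i, ∑ j, ∑ k, ∑ t, ∑ b, R i j k t * u b i * u a j * u b k * u a t := (pull5 _).symm
    _ = ∑ i, ∑ j, ∑ k, ∑ t, (R i j k t * (u a j * u a t)) * ∑ b, u b i * u b k := by
        refine Finset.sum_congr rfl fun i _ => Finset.sum_congr rfl fun j _ =>
          Finset.sum_congr rfl fun k _ => Finset.sum_congr rfl fun t _ => ?_
        rw [Finset.mul_sum]
        exact Finset.sum_congr rfl fun b _ => by ring
    _ = ∑ i, ∑ j, ∑ t, ∑ k, (R i j k t * (u a j * u a t)) * (if i = k then 1 else 0) := by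
        simp only [hcomp]
        exact Finset.sum_congr rfl fun i _ => Finset.sum_congr rfl fun j _ => Finset.sum_comm
    _ = ∑ i, ∑ j, ∑ t, R i j i t * (u a j * u a t) := by
        refine Finset.sum_congr rfl fun i _ => Finset.sum_congr rfl fun j _ =>
          Finset.sum_congr rfl fun t _ => ?_
        simp only [mul_ite, mul_one, mul_zero]
        simp [Finset.sum_ite_eq]
    _ = ∑ j, ∑ t, ∑ i, R i j i t * (u a j * u a t) := (pull3 _).trans (pull3 _)
    _ = ∑ i, ∑ s, ric R i s * (u a i * u a s) := by
        refine Finset.sum_congr rfl fun j _ => Finset.sum_congr rfl fun t _ => ?_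
        rw [ric, Finset.sum_mul]

include hZ in
lemma P3a : ∑ i, ∑ j, (∑ s, ∑ t, R i s j t * Z s t) * Z i j
    = ∑ a, ∑ b, (lam a * lam b) * Kf R u b a := by
  calc ∑ i, ∑ j, (∑ s, ∑ t, R i s j t * Z s t) * Z i j
      = ∑ b, lam b * ∑ i, ∑ j, (∑ s, ∑ t, R i s j t * Z s t) * (u b i * u b j) :=
        sub1 Z lam u hZ _
    _ = ∑ b, lam b * ∑ a, lam a * ∑ s, ∑ t,
          (∑ i, ∑ j, R i s j t * (u b i * u b j)) * (u a s * u a t) := by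
        refine Finset.sum_congr rfl fun b _ => ?_
        congr 1
        calc ∑ i, ∑ j, (∑ s, ∑ t, R i s j t * Z s t) * (u b i * u b j)
            = ∑ i, ∑ j, ∑ s, ∑ t, (R i s j t * (u b i * u b j)) * Z s t := by
              refine Finset.sum_congr rfl fun i _ => Finset.sum_congr rfl fun j _ => ?_
              rw [Finset.sum_mul]
              refine Finset.sum_congr rfl fun s _ => ?_
              rw [Finset.sum_mul]
              exact Finset.sum_congr rfl fun t _ => by ring
          _ = ∑ s, ∑ t, ∑ i, ∑ j, (R i s j t * (u b i * u b j)) * Z s t :=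
              (pull4 _).trans (pull4 _)
          _ = ∑ s, ∑ t, (∑ i, ∑ j, R i s j t * (u b i * u b j)) * Z s t := by
              refine Finset.sum_congr rfl fun s _ => Finset.sum_congr rfl fun t _ => ?_
              rw [Finset.sum_mul]
              exact Finset.sum_congr rfl fun i _ => (Finset.sum_mul _ _ _).symm
          _ = ∑ a, lam a * ∑ s, ∑ t,
                (∑ i, ∑ j, R i s j t * (u b i * u b j)) * (u a s * u a t) :=
              sub1 Z lam u hZ _
    _ = ∑ b, lam b * ∑ a, lam a * Kf R u b a := by
        refine Finset.sum_congr rfl fun b _ => ?_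
        congr 1
        refine Finset.sum_congr rfl fun a _ => ?_
        congr 1
        calc ∑ s, ∑ t, (∑ i, ∑ j, R i s j t * (u b i * u b j)) * (u a s * u a t)
            = ∑ s, ∑ t, ∑ i, ∑ j, (R i s j t * (u b i * u b j)) * (u a s * u a t) := by
              refine Finset.sum_congr rfl fun s _ => Finset.sum_congr rfl fun t _ => ?_
              rw [Finset.sum_mul]
              exact Finset.sum_congr rfl fun i _ => Finset.sum_mul _ _ _
          _ = ∑ i, ∑ s, ∑ t, ∑ j, (R i s j t * (u b i * u b j)) * (u a s * u a t) :=
              pull3 _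
          _ = ∑ i, ∑ s, ∑ j, ∑ t, (R i s j t * (u b i * u b j)) * (u a s * u a t) :=
              Finset.sum_congr rfl fun i _ => Finset.sum_congr rfl fun s _ =>
                Finset.sum_comm
          _ = Kf R u b a := by
              rw [Kf]
              exact Finset.sum_congr rfl fun i _ => Finset.sum_congr rfl fun s _ =>
                Finset.sum_congr rfl fun j _ => Finset.sum_congr rfl fun t _ => by ring
    _ = ∑ a, ∑ b, (lam a * lam b) * Kf R u b a := by
        rw [Finset.sum_comm]
        refine Finset.sum_congr rfl fun a _ => ?_
        rw [Finset.mul_sum]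
        exact Finset.sum_congr rfl fun b _ => by ring


include hZ in
lemma P3b (hRp : ∀ i j k t, R i j k t = R k t i j) :
    ∑ i, ∑ j, (∑ s, ∑ t, R j s i t * Z t s) * Z i j
    = ∑ a, ∑ b, (lam a * lam b) * Kf R u b a := by
  have hZsym : ∀ i j, Z i j = Z j i := by
    intro i j; rw [hZ, hZ]; exact Finset.sum_congr rfl fun a _ => by ring
  calc ∑ i, ∑ j, (∑ s, ∑ t, R j s i t * Z t s) * Z i j
      = ∑ b, lam b * ∑ i, ∑ j, (∑ s, ∑ t, R j s i t * Z t s) * (u b i * u b j) :=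
        sub1 Z lam u hZ _
    _ = ∑ b, lam b * ∑ a, lam a * ∑ s, ∑ t,
          (∑ i, ∑ j, R j s i t * (u b i * u b j)) * (u a s * u a t) := by
        refine Finset.sum_congr rfl fun b _ => ?_
        congr 1
        calc ∑ i, ∑ j, (∑ s, ∑ t, R j s i t * Z t s) * (u b i * u b j)
            = ∑ i, ∑ j, ∑ s, ∑ t, (R j s i t * (u b i * u b j)) * Z s t := by
              refine Finset.sum_congr rfl fun i _ => Finset.sum_congr rfl fun j _ => ?_
              rw [Finset.sum_mul]
              refine Finset.sum_congr rfl fun s _ => ?_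
              rw [Finset.sum_mul]
              refine Finset.sum_congr rfl fun t _ => ?_
              rw [hZsym t s]; ring
          _ = ∑ s, ∑ t, ∑ i, ∑ j, (R j s i t * (u b i * u b j)) * Z s t :=
              (pull4 _).trans (pull4 _)
          _ = ∑ s, ∑ t, (∑ i, ∑ j, R j s i t * (u b i * u b j)) * Z s t := by
              refine Finset.sum_congr rfl fun s _ => Finset.sum_congr rfl fun t _ => ?_
              rw [Finset.sum_mul]
              exact Finset.sum_congr rfl fun i _ => (Finset.sum_mul _ _ _).symm
          _ = ∑ a, lam a * ∑ s, ∑ t,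
                (∑ i, ∑ j, R j s i t * (u b i * u b j)) * (u a s * u a t) :=
              sub1 Z lam u hZ _
    _ = ∑ b, lam b * ∑ a, lam a * Kf R u b a := by
        refine Finset.sum_congr rfl fun b _ => ?_
        congr 1
        refine Finset.sum_congr rfl fun a _ => ?_
        congr 1
        calc ∑ s, ∑ t, (∑ i, ∑ j, R j s i t * (u b i * u b j)) * (u a s * u a t)
            = ∑ s, ∑ t, ∑ i, ∑ j, (R i t j s * (u b i * u b j)) * (u a s * u a t) := by
              refine Finset.sum_congr rfl fun s _ => Finset.sum_congr rfl fun t _ => ?_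
              rw [Finset.sum_mul]
              refine Finset.sum_congr rfl fun i _ => ?_
              rw [Finset.sum_mul]
              refine Finset.sum_congr rfl fun j _ => ?_
              rw [hRp j s i t]
          _ = ∑ i, ∑ s, ∑ t, ∑ j, (R i t j s * (u b i * u b j)) * (u a s * u a t) :=
              pull3 _
          _ = ∑ i, ∑ t, ∑ j, ∑ s, (R i t j s * (u b i * u b j)) * (u a s * u a t) :=
              Finset.sum_congr rfl fun i _ => (pull3 _).trans (pull3 _)
          _ = Kf R u b a := by
              rw [Kf]
              exact Finset.sum_congr rfl fun i _ => Finset.sum_congr rfl fun t _ =>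
                Finset.sum_congr rfl fun j _ => Finset.sum_congr rfl fun s _ => by ring
    _ = ∑ a, ∑ b, (lam a * lam b) * Kf R u b a := by
        rw [Finset.sum_comm]
        refine Finset.sum_congr rfl fun a _ => ?_
        rw [Finset.mul_sum]
        exact Finset.sum_congr rfl fun b _ => by ring

lemma Ksym (hRa : ∀ i j k t, R i j k t = - R j i k t)
    (hRp : ∀ i j k t, R i j k t = R k t i j) (a b : Fin m) :
    Kf R u a b = Kf R u b a := by
  have hR4 : ∀ i j k t, R i j k t = R j i t k := by
    intro i j k t
    have h1 := hRp j i t k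
    have h2 := hRa t k j i
    have h3 := hRp k t j i
    have h4 := hRa i j k t
    linarith
  calc Kf R u a b
      = ∑ i, ∑ j, ∑ k, ∑ t, (R j i t k * u a i) * u b j * u a k * u b t := by
        rw [Kf]
        exact Finset.sum_congr rfl fun i _ => Finset.sum_congr rfl fun j _ =>
          Finset.sum_congr rfl fun k _ => Finset.sum_congr rfl fun t _ => by
            rw [hR4 i j k t]
    _ = ∑ j, ∑ i, ∑ k, ∑ t, (R j i t k * u a i) * u b j * u a k * u b t :=
        Finset.sum_comm
    _ = ∑ j, ∑ i, ∑ t, ∑ k, (R j i t k * u a i) * u b j * u a k * u b t :=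
        Finset.sum_congr rfl fun j _ => Finset.sum_congr rfl fun i _ => Finset.sum_comm
    _ = Kf R u b a := by
        rw [Kf]
        exact Finset.sum_congr rfl fun j _ => Finset.sum_congr rfl fun i _ =>
          Finset.sum_congr rfl fun t _ => Finset.sum_congr rfl fun k _ => by ring


include hZ horto hcomp in
lemma main_identity (hRa : ∀ i j k t, R i j k t = - R j i k t)
    (hRp : ∀ i j k t, R i j k t = R k t i j) :
    ∑ i, ∑ j, gamma2 R Z i j * Z i j = ∑ a, ∑ b, Kf R u a b * (lam a - lam b)^2 := by
  have split : ∀ i j, gamma2 R Z i j * Z i j =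
      (∑ s, ric R i s * Z s j) * Z i j + ((∑ s, ric R j s * Z i s) * Z i j
      - ((∑ s, ∑ t, R i s j t * Z s t) * Z i j + (∑ s, ∑ t, R j s i t * Z t s) * Z i j)) := by
    intro i j
    rw [gamma2]
    have h : (∑ s, ∑ t, (R i s j t * Z s t + R j s i t * Z t s))
        = (∑ s, ∑ t, R i s j t * Z s t) + (∑ s, ∑ t, R j s i t * Z t s) := by
      rw [← Finset.sum_add_distrib]
      exact Finset.sum_congr rfl fun s _ => Finset.sum_add_distrib
    rw [h]; ring
  have hs1 : ∀ a, lam a ^ 2 * (∑ i, ∑ s, ric R i s * (u a i * u a s))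
      = ∑ b, Kf R u a b * lam a ^ 2 := by
    intro a
    rw [← sumK R u hcomp a, Finset.mul_sum]
    exact Finset.sum_congr rfl fun b _ => by rw [Ksym R u hRa hRp a b]; ring
  calc ∑ i, ∑ j, gamma2 R Z i j * Z i j
      = ∑ i, ∑ j, ((∑ s, ric R i s * Z s j) * Z i j + ((∑ s, ric R j s * Z i s) * Z i j
        - ((∑ s, ∑ t, R i s j t * Z s t) * Z i j + (∑ s, ∑ t, R j s i t * Z t s) * Z i j))) :=
        Finset.sum_congr rfl fun i _ => Finset.sum_congr rfl fun j _ => split i j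
    _ = (∑ i, ∑ j, (∑ s, ric R i s * Z s j) * Z i j)
        + ((∑ i, ∑ j, (∑ s, ric R j s * Z i s) * Z i j)
        - ((∑ i, ∑ j, (∑ s, ∑ t, R i s j t * Z s t) * Z i j)
          + (∑ i, ∑ j, (∑ s, ∑ t, R j s i t * Z t s) * Z i j))) := by
        simp only [Finset.sum_add_distrib, Finset.sum_sub_distrib]
    _ = (∑ a, ∑ b, Kf R u a b * lam a ^ 2) + ((∑ a, ∑ b, Kf R u a b * lam a ^ 2)
        - ((∑ a, ∑ b, (lam a * lam b) * Kf R u b a)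
          + (∑ a, ∑ b, (lam a * lam b) * Kf R u b a))) := by
        rw [P1 R Z lam u hZ horto, P2 R Z lam u hZ horto, P3a R Z lam u hZ,
          P3b R Z lam u hZ hRp]
        congr 1
        · exact Finset.sum_congr rfl fun a _ => hs1 a
        congr 1
        exact Finset.sum_congr rfl fun a _ => hs1 a
    _ = ∑ a, ∑ b, Kf R u a b * (lam a - lam b)^2 := by
        have S2 : ∀ a b, (lam a * lam b) * Kf R u b a = Kf R u a b * (lam a * lam b) :=
          fun a b => by rw [Ksym R u hRa hRp a b]; ring
        have S3 : (∑ a, ∑ b, Kf R u a b * lam b ^ 2) = ∑ a, ∑ b, Kf R u a b * lam a ^ 2 := by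
          rw [Finset.sum_comm]
          exact Finset.sum_congr rfl fun a _ => Finset.sum_congr rfl fun b _ => by
            rw [Ksym R u hRa hRp a b]
        have expand : (∑ a, ∑ b, Kf R u a b * (lam a - lam b)^2)
            = (∑ a, ∑ b, Kf R u a b * lam a ^ 2) + ((∑ a, ∑ b, Kf R u a b * lam b ^ 2)
              - ((∑ a, ∑ b, Kf R u a b * (lam a * lam b))
                + (∑ a, ∑ b, Kf R u a b * (lam a * lam b)))) := by
          simp only [← Finset.sum_add_distrib, ← Finset.sum_sub_distrib]
          exact Finset.sum_congr rfl fun a _ => Finset.sum_congr rfl fun b _ => by ring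
        have e2 : (∑ a, ∑ b, (lam a * lam b) * Kf R u b a)
            = ∑ a, ∑ b, Kf R u a b * (lam a * lam b) :=
          Finset.sum_congr rfl fun a _ => Finset.sum_congr rfl fun b _ => S2 a b
        rw [expand, S3, e2]

end

lemma factor2 (f g : Fin m → ℝ) : ∑ i, ∑ j, f i * g j = (∑ i, f i) * (∑ j, g j) :=
  (Finset.sum_mul_sum _ _ _ _).symm

lemma dform_inner (X Y X' Y' : Fin m → ℝ) :
    inner2 (dform X Y) (dform X' Y') =
      ((∑ i, X i * X' i) * (∑ i, Y i * Y' i) - (∑ i, X i * Y' i) * (∑ i, Y i * X' i)) / 2 := by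
  have expand : ∀ i j, dform X Y i j * dform X' Y' i j =
      ((X i * X' i) * (Y j * Y' j) + (X j * X' j) * (Y i * Y' i)
        - ((X i * Y' i) * (Y j * X' j) + (X j * Y' j) * (Y i * X' i))) / 4 := by
    intro i j; rw [dform, dform]; ring
  have e1 : (∑ i, ∑ j, (X i * X' i) * (Y j * Y' j))
      = (∑ i, X i * X' i) * (∑ i, Y i * Y' i) := factor2 _ _
  have e2 : (∑ i, ∑ j, (X j * X' j) * (Y i * Y' i))
      = (∑ i, Y i * Y' i) * (∑ i, X i * X' i) :=
    (Finset.sum_congr rfl fun i _ => Finset.sum_congr rfl fun j _ => by ring).trans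
      (factor2 _ _)
  have e3 : (∑ i, ∑ j, (X i * Y' i) * (Y j * X' j))
      = (∑ i, X i * Y' i) * (∑ i, Y i * X' i) := factor2 _ _
  have e4 : (∑ i, ∑ j, (X j * Y' j) * (Y i * X' i))
      = (∑ i, Y i * X' i) * (∑ i, X i * Y' i) :=
    (Finset.sum_congr rfl fun i _ => Finset.sum_congr rfl fun j _ => by ring).trans
      (factor2 _ _)
  calc inner2 (dform X Y) (dform X' Y')
      = ∑ i, ∑ j, ((X i * X' i) * (Y j * Y' j) + (X j * X' j) * (Y i * Y' i)
        - ((X i * Y' i) * (Y j * X' j) + (X j * Y' j) * (Y i * X' i))) / 4 :=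
        Finset.sum_congr rfl fun i _ => Finset.sum_congr rfl fun j _ => expand i j
    _ = (∑ i, ∑ j, ((X i * X' i) * (Y j * Y' j) + (X j * X' j) * (Y i * Y' i)
        - ((X i * Y' i) * (Y j * X' j) + (X j * Y' j) * (Y i * X' i)))) / 4 :=
        (Finset.sum_congr rfl fun i _ => (Finset.sum_div _ _ _).symm).trans
          (Finset.sum_div _ _ _).symm
    _ = ((∑ i, ∑ j, (X i * X' i) * (Y j * Y' j)) + (∑ i, ∑ j, (X j * X' j) * (Y i * Y' i))
        - ((∑ i, ∑ j, (X i * Y' i) * (Y j * X' j)) + (∑ i, ∑ j, (X j * Y' j) * (Y i * X' i)))) / 4 := by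
        simp only [Finset.sum_add_distrib, Finset.sum_sub_distrib]
    _ = _ := by
        rw [e1, e2, e3, e4]; ring

section
variable (u : Fin m → Fin m → ℝ)
  (horto : ∀ a b, ∑ k, u a k * u b k = (if a = b then (1:ℝ) else 0))

include horto in
lemma dform_ortho {a b c d : Fin m} (hab : a < b) (hcd : c < d)
    (hne : (a, b) ≠ (c, d)) :
    inner2 (dform (u a) (u b)) (dform (u c) (u d)) = 0 := by
  rw [dform_inner, horto, horto, horto, horto]
  have h1 : ¬(a = c ∧ b = d) := fun ⟨h, h'⟩ => hne (by rw [h, h'])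
  have h2 : ¬(a = d ∧ b = c) := by
    rintro ⟨rfl, rfl⟩
    exact absurd (hab.trans hcd) (lt_irrefl _)
  by_cases hac : a = c <;> by_cases hbd : b = d <;>
    by_cases had : a = d <;> by_cases hbc : b = c <;>
    simp_all

include horto in
lemma li_pair {a b : Fin m} (hab : a ≠ b) : LinearIndependent ℝ ![u a, u b] := by
  rw [linearIndependent_fin2]
  have hb : ∑ k, u b k * u b k = 1 := by rw [horto]; simp
  have ha : ∑ k, u a k * u a k = 1 := by rw [horto]; simp
  have hab' : ∑ k, u a k * u b k = 0 := by rw [horto]; simp [hab]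
  constructor
  · intro h0
    simp only [Matrix.cons_val_one, Matrix.head_cons] at h0
    rw [show u b = 0 from h0] at hb
    simp at hb
  · intro r hr
    simp only [Matrix.cons_val_one, Matrix.head_cons, Matrix.cons_val_zero] at hr
    have h1 : ∑ k, u a k * u b k = r * ∑ k, u b k * u b k := by
      rw [← hr, Finset.mul_sum]
      exact Finset.sum_congr rfl fun k _ => by simp [Pi.smul_apply]; ring
    rw [hab', hb, mul_one] at h1
    rw [← hr, ← h1] at ha
    simp at ha

include horto in
lemma sect_eq {a b : Fin m}
    (R : Fin m → Fin m → Fin m → Fin m → ℝ) (hab : a ≠ b) :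
    sect R (u a) (u b) = ∑ i, ∑ j, ∑ k, ∑ t, R i j k t * u a i * u b j * u a k * u b t := by
  rw [sect]
  have h1 : ∑ i, u a i * u a i = 1 := by rw [horto]; simp
  have h2 : ∑ i, u b i * u b i = 1 := by rw [horto]; simp
  have h3 : ∑ i, u a i * u b i = 0 := by rw [horto]; simp [hab]
  rw [h1, h2, h3]
  norm_num

end



lemma pair_sum (F : Fin m → Fin m → ℝ) (hFsym : ∀ a b, F a b = F b a)
    (hFdiag : ∀ a, F a a = 0) :
    ∑ a, ∑ b, F a b = 2 * ∑ e : {p : Fin m × Fin m // p.1 < p.2}, F e.val.1 e.val.2 := by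
  classical
  have hsub : ∑ e : {p : Fin m × Fin m // p.1 < p.2}, F e.val.1 e.val.2
      = ∑ p ∈ Finset.univ.filter (fun p : Fin m × Fin m => p.1 < p.2), F p.1 p.2 :=
    (Finset.sum_subtype (Finset.univ.filter (fun p : Fin m × Fin m => p.1 < p.2))
      (fun x => by simp [Finset.mem_filter]) (fun p => F p.1 p.2)).symm
  have h0 : ∑ a, ∑ b, F a b = ∑ p : Fin m × Fin m, F p.1 p.2 := by
    rw [Fintype.sum_prod_type]
  have hsplit : ∑ p : Fin m × Fin m, F p.1 p.2
      = (∑ p ∈ Finset.univ.filter (fun p : Fin m × Fin m => p.1 < p.2), F p.1 p.2)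
      + ∑ p ∈ Finset.univ.filter (fun p : Fin m × Fin m => ¬ p.1 < p.2), F p.1 p.2 :=
    (Finset.sum_filter_add_sum_filter_not _ _ _).symm
  have hgt : ∑ p ∈ Finset.univ.filter (fun p : Fin m × Fin m => ¬ p.1 < p.2), F p.1 p.2
      = (∑ p ∈ Finset.univ.filter (fun p : Fin m × Fin m => p.2 < p.1), F p.1 p.2) := by
    have hsplit2 := (Finset.sum_filter_add_sum_filter_not
      (Finset.univ.filter (fun p : Fin m × Fin m => ¬ p.1 < p.2))
      (fun p => p.2 < p.1) (fun p => F p.1 p.2)).symm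
    rw [Finset.filter_filter, Finset.filter_filter] at hsplit2
    have hdiag : ∑ p ∈ Finset.univ.filter
        (fun p : Fin m × Fin m => ¬ p.1 < p.2 ∧ ¬ p.2 < p.1), F p.1 p.2 = 0 := by
      apply Finset.sum_eq_zero
      intro p hp
      simp only [Finset.mem_filter] at hp
      have : p.1 = p.2 := le_antisymm (not_lt.mp hp.2.2) (not_lt.mp hp.2.1)
      rw [show p.1 = p.2 from this, hFdiag]
    have hset : Finset.univ.filter (fun p : Fin m × Fin m => ¬ p.1 < p.2 ∧ p.2 < p.1)
        = Finset.univ.filter (fun p : Fin m × Fin m => p.2 < p.1) := by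
      apply Finset.filter_congr
      intro p _
      exact ⟨fun h => h.2, fun h => ⟨not_lt.mpr h.le, h⟩⟩
    rw [hset, hdiag, add_zero] at hsplit2
    exact hsplit2
  have hswap : ∑ p ∈ Finset.univ.filter (fun p : Fin m × Fin m => p.2 < p.1), F p.1 p.2
      = ∑ p ∈ Finset.univ.filter (fun p : Fin m × Fin m => p.1 < p.2), F p.1 p.2 := by
    apply Finset.sum_nbij' (fun p => Prod.swap p) (fun p => Prod.swap p)
    · intro p hp; simp only [Finset.mem_filter] at *; exact ⟨Finset.mem_univ _, hp.2⟩
    · intro p hp; simp only [Finset.mem_filter] at *; exact ⟨Finset.mem_univ _, hp.2⟩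
    · intro p _; simp
    · intro p _; simp
    · intro p _; exact hFsym p.1 p.2
  rw [h0, hsplit, hgt, hswap, hsub]
  ring

lemma card_E (hm : 2 ≤ m) :
    m / 2 ≤ Fintype.card {p : Fin m × Fin m // p.1 < p.2} := by
  have key : ∀ i : Fin (m / 2), 2 * (i : ℕ) + 1 < m := by
    intro i
    have h1 : (i : ℕ) < m / 2 := i.isLt
    omega
  let f : Fin (m / 2) → {p : Fin m × Fin m // p.1 < p.2} := fun i =>
    ⟨(⟨2 * i, by have := key i; omega⟩, ⟨2 * i + 1, key i⟩), by
      simp [Fin.lt_def]⟩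
  have hf : Function.Injective f := by
    intro i j hij
    have h1 : (2 * (i:ℕ) : ℕ) = 2 * (j:ℕ) := by
      have := congrArg (fun x => ((x : {p : Fin m × Fin m // p.1 < p.2}).val.1 : ℕ)) hij
      simpa [f] using this
    omega
  simpa using Fintype.card_le_of_injective f hf

/-- If the average of the sectional curvatures over every collection of
`⌊m/2⌋` mutually orthogonal 2-planes is at least `C`, then for every symmetric traceless
matrix `Z` one has `⟨ΓZ, Z⟩ ≥ 2m·C·|Z|²`. -/
theorem statement2 (m : ℕ) (hm : 2 ≤ m) (C : ℝ)
    (R : Fin m → Fin m → Fin m → Fin m → ℝ) (hR : IsACT R)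
    (hsect : ∀ X Y : Fin (m / 2) → Fin m → ℝ,
      (∀ i, LinearIndependent ℝ ![X i, Y i]) →
      (∀ i j, i ≠ j → inner2 (dform (X i) (Y i)) (dform (X j) (Y j)) = 0) →
      C ≤ (∑ i, sect R (X i) (Y i)) / ((m / 2 : ℕ) : ℝ))
    (Z : Fin m → Fin m → ℝ) (hZsym : ∀ i j, Z i j = Z j i) (hZtr : ∑ i, Z i i = 0) :
    2 * (m : ℝ) * C * inner2 Z Z ≤ inner2 (gamma2 R Z) Z := by
  obtain ⟨hRa, hRp, -⟩ := hR
  obtain ⟨lam, u, hZ, horto, hcomp⟩ := spectral Z hZsym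
  have hn0 : 0 < m / 2 := Nat.div_pos hm (by norm_num)
  have hn0R : (0:ℝ) < ((m / 2 : ℕ) : ℝ) := by exact_mod_cast hn0
  have hsum0 : ∑ a, lam a = 0 := by rw [← trace_eq Z lam u hZ horto]; exact hZtr
  have hQ0 : (0:ℝ) ≤ ∑ a, lam a ^ 2 := Finset.sum_nonneg fun a _ => sq_nonneg _
  have hnorm : inner2 Z Z = ∑ a, lam a ^ 2 := norm_eq Z lam u hZ horto
  have hmain : inner2 (gamma2 R Z) Z = ∑ a, ∑ b, Kf R u a b * (lam a - lam b)^2 :=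
    main_identity R Z lam u hZ horto hcomp hRa hRp
  have hsubset : ∀ S : Finset {p : Fin m × Fin m // p.1 < p.2}, S.card = m / 2 →
      0 ≤ ∑ e ∈ S, (Kf R u e.val.1 e.val.2 - C) := by
    intro S hS
    have hcast : m / 2 = S.card := hS.symm
    let e' : Fin (m / 2) → {p : Fin m × Fin m // p.1 < p.2} :=
      fun i => (S.equivFin.symm (finCongr hcast i) : {x // x ∈ S}).val
    have hinj : Function.Injective e' := by
      intro i j hij
      exact (finCongr hcast).injective (S.equivFin.symm.injective (Subtype.coe_injective hij))
    have hC := hsect (fun i => u (e' i).val.1) (fun i => u (e' i).val.2)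
      (fun i => li_pair u horto (ne_of_lt (e' i).prop))
      (by
        intro i j hij
        refine dform_ortho u horto (e' i).prop (e' j).prop ?_
        intro hpair
        apply hij
        apply hinj
        apply Subtype.ext
        simp only [Prod.mk.injEq] at hpair
        exact Prod.ext hpair.1 hpair.2)
    have hsects : (∑ i, sect R (u (e' i).val.1) (u (e' i).val.2))
        = ∑ i, Kf R u (e' i).val.1 (e' i).val.2 :=
      Finset.sum_congr rfl fun i _ => sect_eq u horto R (ne_of_lt (e' i).prop)
    rw [hsects] at hC
    have hC2 : C * ((m / 2 : ℕ) : ℝ) ≤ ∑ i, Kf R u (e' i).val.1 (e' i).val.2 :=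
      (le_div_iff₀ hn0R).mp hC
    have hsum_eq : ∑ i, Kf R u (e' i).val.1 (e' i).val.2
        = ∑ e ∈ S, Kf R u e.val.1 e.val.2 := by
      calc ∑ i, Kf R u (e' i).val.1 (e' i).val.2
          = ∑ j : Fin S.card, Kf R u (S.equivFin.symm j).val.val.1
              (S.equivFin.symm j).val.val.2 :=
            Equiv.sum_comp (finCongr hcast)
              (fun j => Kf R u (S.equivFin.symm j).val.val.1 (S.equivFin.symm j).val.val.2)
        _ = ∑ x : {x // x ∈ S}, Kf R u x.val.val.1 x.val.val.2 :=
            Equiv.sum_comp S.equivFin.symm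
              (fun (x : {x // x ∈ S}) => Kf R u x.val.val.1 x.val.val.2)
        _ = ∑ e ∈ S, Kf R u e.val.1 e.val.2 :=
            Finset.sum_coe_sort S (fun e => Kf R u e.val.1 e.val.2)
    have hsplit : ∑ e ∈ S, (Kf R u e.val.1 e.val.2 - C)
        = (∑ e ∈ S, Kf R u e.val.1 e.val.2) - (S.card : ℝ) * C := by
      rw [Finset.sum_sub_distrib, Finset.sum_const, nsmul_eq_mul]
    rw [hsplit, hS]
    rw [hsum_eq] at hC2
    linarith
  have hF2tot : ∑ a, ∑ b, (lam a - lam b)^2 = 2 * (m:ℝ) * (∑ a, lam a^2) := by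
    have hrow : ∀ a, ∑ b, (lam a - lam b)^2 = (m:ℝ) * lam a^2 + ∑ b, lam b^2 := by
      intro a
      calc ∑ b, (lam a - lam b)^2
          = ∑ b, (lam a^2 + lam b^2 - 2*lam a*lam b) :=
            Finset.sum_congr rfl fun b _ => by ring
        _ = (∑ b, (lam a^2 + lam b^2)) - ∑ b, 2*lam a*lam b := Finset.sum_sub_distrib _ _
        _ = ((∑ _b : Fin m, lam a^2) + ∑ b, lam b^2) - 2*lam a*∑ b, lam b := by
            rw [Finset.sum_add_distrib, Finset.mul_sum]
        _ = (m:ℝ)*lam a^2 + ∑ b, lam b^2 := by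
            rw [Finset.sum_const, Finset.card_univ, Fintype.card_fin, nsmul_eq_mul, hsum0]
            ring
    calc ∑ a, ∑ b, (lam a - lam b)^2 = ∑ a, ((m:ℝ)*lam a^2 + ∑ b, lam b^2) :=
          Finset.sum_congr rfl fun a _ => hrow a
      _ = (m:ℝ)*(∑ a, lam a^2) + ∑ _a : Fin m, ∑ b, lam b^2 := by
          rw [Finset.sum_add_distrib, ← Finset.mul_sum]
      _ = 2*(m:ℝ)*(∑ a, lam a^2) := by
          rw [Finset.sum_const, Finset.card_univ, Fintype.card_fin, nsmul_eq_mul]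
          ring
  have hpair1 : ∑ a, ∑ b, Kf R u a b * (lam a - lam b)^2
      = 2 * ∑ e : {p : Fin m × Fin m // p.1 < p.2},
          Kf R u e.val.1 e.val.2 * (lam e.val.1 - lam e.val.2)^2 :=
    pair_sum _ (fun a b => by rw [Ksym R u hRa hRp a b]; ring) (fun a => by simp)
  have hpair2 : ∑ a, ∑ b, (lam a - lam b)^2
      = 2 * ∑ e : {p : Fin m × Fin m // p.1 < p.2}, (lam e.val.1 - lam e.val.2)^2 :=
    pair_sum _ (fun a b => by ring) (fun a => by simp)
  have hB : (∑ e : {p : Fin m × Fin m // p.1 < p.2}, (lam e.val.1 - lam e.val.2)^2)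
      = (m:ℝ) * ∑ a, lam a^2 := by linarith
  have hc0 : ∀ e : {p : Fin m × Fin m // p.1 < p.2},
      (0:ℝ) ≤ (lam e.val.1 - lam e.val.2)^2 := fun e => sq_nonneg _
  have hcT : ∀ e : {p : Fin m × Fin m // p.1 < p.2},
      (lam e.val.1 - lam e.val.2)^2 * ((m / 2 : ℕ) : ℝ)
        ≤ ∑ x : {p : Fin m × Fin m // p.1 < p.2}, (lam x.val.1 - lam x.val.2)^2 := by
    intro e
    have hss : lam e.val.1^2 + lam e.val.2^2 ≤ ∑ a, lam a^2 := by
      have h := Finset.sum_le_sum_of_subset_of_nonneg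
        (Finset.subset_univ ({e.val.1, e.val.2} : Finset (Fin m)))
        (fun i _ _ => sq_nonneg (lam i))
      rwa [Finset.sum_pair (ne_of_lt e.prop)] at h
    have h2 : (lam e.val.1 - lam e.val.2)^2 ≤ 2 * ∑ a, lam a^2 := by
      nlinarith [sq_nonneg (lam e.val.1 + lam e.val.2)]
    have h3 : 2 * ((m / 2 : ℕ) : ℝ) ≤ (m:ℝ) := by
      have h4 : 2 * (m / 2) ≤ m := by omega
      exact_mod_cast h4
    rw [hB]
    calc (lam e.val.1 - lam e.val.2)^2 * ((m / 2 : ℕ) : ℝ)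
        ≤ (2 * ∑ a, lam a^2) * ((m / 2 : ℕ) : ℝ) :=
          mul_le_mul_of_nonneg_right h2 hn0R.le
      _ = (∑ a, lam a^2) * (2 * ((m / 2 : ℕ) : ℝ)) := by ring
      _ ≤ (∑ a, lam a^2) * (m:ℝ) := mul_le_mul_of_nonneg_left h3 hQ0
      _ = (m:ℝ) * ∑ a, lam a^2 := by ring
  have hkey : 0 ≤ ∑ e : {p : Fin m × Fin m // p.1 < p.2},
      (Kf R u e.val.1 e.val.2 - C) * (lam e.val.1 - lam e.val.2)^2 :=
    key_comb (m / 2) hn0 (card_E hm)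
      (fun e => Kf R u e.val.1 e.val.2 - C)
      (fun e => (lam e.val.1 - lam e.val.2)^2) hc0 hcT hsubset
  have hsplitC : ∑ e : {p : Fin m × Fin m // p.1 < p.2},
      (Kf R u e.val.1 e.val.2 - C) * (lam e.val.1 - lam e.val.2)^2
      = (∑ e : {p : Fin m × Fin m // p.1 < p.2},
          Kf R u e.val.1 e.val.2 * (lam e.val.1 - lam e.val.2)^2)
        - C * ∑ e : {p : Fin m × Fin m // p.1 < p.2}, (lam e.val.1 - lam e.val.2)^2 := by
    rw [Finset.mul_sum, ← Finset.sum_sub_distrib]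
    exact Finset.sum_congr rfl fun e _ => by ring
  have hCB : C * (∑ e : {p : Fin m × Fin m // p.1 < p.2}, (lam e.val.1 - lam e.val.2)^2)
      = C * ((m:ℝ) * ∑ a, lam a^2) := by rw [hB]
  rw [hnorm, hmain, hpair1]
  linarith

end

end Paper
end

section
/- Let m ≥ 2 and let R be an algebraic curvature tensor on ℝ^m with associated Lichnerowicz operator Γ. Let W be a totally traceless algebraic curvature tensor on ℝ^m (one with Σ_k W_{kikj} = 0 for all i,j) and let E be any symmetric matrix. Then ⟨ΓW, E⊙δ⟩ = 0, where Γ acts on 4-covariant tensors and ⊙ is the Kulkarni–Nomizu product. -/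
open Finset

namespace Paper

noncomputable section

variable {m : ℕ}

section AuxLemmas
variable {m : ℕ}

lemma sum_delta_mul (f : Fin m → ℝ) (j : Fin m) : (∑ t, f t * delta j t) = f j := by
  simp [delta, Finset.sum_ite_eq]

lemma sum_delta_mul' (f : Fin m → ℝ) (j : Fin m) : (∑ t, f t * delta t j) = f j := by
  simp [delta, Finset.sum_ite_eq']

lemma last_antisym {T : Fin m → Fin m → Fin m → Fin m → ℝ}
    (h1 : ∀ i j k t, T i j k t = - T j i k t) (h2 : ∀ i j k t, T i j k t = T k t i j)
    (i j k t : Fin m) : T i j k t = - T i j t k := by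
  rw [h2, h1, ← h2]

lemma Rsym {T : Fin m → Fin m → Fin m → Fin m → ℝ}
    (h1 : ∀ i j k t, T i j k t = - T j i k t) (h2 : ∀ i j k t, T i j k t = T k t i j)
    (i s j t : Fin m) : T s i t j = T i s j t := by
  rw [h1, h2, h1, neg_neg, h2]

lemma ric_symm {T : Fin m → Fin m → Fin m → Fin m → ℝ}
    (h2 : ∀ i j k t, T i j k t = T k t i j) (i j : Fin m) : ric T i j = ric T j i :=
  Finset.sum_congr rfl fun k _ => h2 k i k j

lemma tr23 {W : Fin m → Fin m → Fin m → Fin m → ℝ}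
    (h1 : ∀ i j k t, W i j k t = - W j i k t)
    (htr : ∀ i j, ric W i j = 0) (i t : Fin m) : (∑ s, W i s s t) = 0 := by
  have h : (∑ s, W i s s t) = - ∑ s, W s i s t := by
    rw [← Finset.sum_neg_distrib]
    exact Finset.sum_congr rfl fun s _ => by rw [h1]
  rw [h, show (∑ s, W s i s t) = ric W i t from rfl, htr, neg_zero]

lemma tr24 {W : Fin m → Fin m → Fin m → Fin m → ℝ}
    (h1 : ∀ i j k t, W i j k t = - W j i k t) (h2 : ∀ i j k t, W i j k t = W k t i j)
    (htr : ∀ i j, ric W i j = 0) (i k : Fin m) : (∑ s, W i s k s) = 0 := by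
  have h : (∑ s, W i s k s) = ∑ s, W s i s k :=
    Finset.sum_congr rfl fun s _ => by
      rw [last_antisym h1 h2, h1, neg_neg]
  rw [h, show (∑ s, W s i s k) = ric W i k from rfl, htr]

lemma tr14 {W : Fin m → Fin m → Fin m → Fin m → ℝ}
    (h1 : ∀ i j k t, W i j k t = - W j i k t) (h2 : ∀ i j k t, W i j k t = W k t i j)
    (htr : ∀ i j, ric W i j = 0) (j k : Fin m) : (∑ s, W s j k s) = 0 := by
  have h : (∑ s, W s j k s) = - ∑ s, W j s k s := by
    rw [← Finset.sum_neg_distrib]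
    exact Finset.sum_congr rfl fun s _ => by rw [h1]
  rw [h, tr24 h1 h2 htr, neg_zero]

/-- Lemma C : a traceless tensor is orthogonal to anything of the form `A ⊙ δ`. -/
lemma inner4_kn_delta_eq_zero {W : Fin m → Fin m → Fin m → Fin m → ℝ}
    (h1 : ∀ i j k t, W i j k t = - W j i k t) (h2 : ∀ i j k t, W i j k t = W k t i j)
    (htr : ∀ i j, ric W i j = 0) (A : Fin m → Fin m → ℝ) :
    inner4 W (kn A delta) = 0 := by
  unfold inner4 kn
  have key : ∀ i j k t : Fin m, W i j k t *
      (A i k * delta j t + A j t * delta i k - A i t * delta j k - A j k * delta i t)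
      = (W i j k t * A i k) * delta j t + (W i j k t * A j t) * delta i k
        - (W i j k t * A i t) * delta j k - (W i j k t * A j k) * delta i t := by
    intro i j k t; ring
  calc (∑ i, ∑ j, ∑ k, ∑ t, W i j k t *
      (A i k * delta j t + A j t * delta i k - A i t * delta j k - A j k * delta i t))
      = ∑ i, ∑ j, ∑ k, ((∑ t, (W i j k t * A i k) * delta j t)
          + (∑ t, (W i j k t * A j t) * delta i k)
          - (∑ t, (W i j k t * A i t) * delta j k)
          - (∑ t, (W i j k t * A j k) * delta i t)) := by
        refine Finset.sum_congr rfl fun i _ => Finset.sum_congr rfl fun j _ =>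
          Finset.sum_congr rfl fun k _ => ?_
        rw [show (∑ t, W i j k t *
            (A i k * delta j t + A j t * delta i k - A i t * delta j k - A j k * delta i t))
            = ∑ t, ((W i j k t * A i k) * delta j t + (W i j k t * A j t) * delta i k
              - (W i j k t * A i t) * delta j k - (W i j k t * A j k) * delta i t) from
          Finset.sum_congr rfl fun t _ => key i j k t]
        rw [Finset.sum_sub_distrib, Finset.sum_sub_distrib, Finset.sum_add_distrib]
    _ = ∑ i, ∑ j, ∑ k, (W i j k j * A i k
          + (∑ t, W i j k t * A j t) * delta i k
          - (∑ t, W i j k t * A i t) * delta j k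
          - W i j k i * A j k) := by
        refine Finset.sum_congr rfl fun i _ => Finset.sum_congr rfl fun j _ =>
          Finset.sum_congr rfl fun k _ => ?_
        rw [sum_delta_mul (fun t => W i j k t * A i k) j,
            sum_delta_mul (fun t => W i j k t * A j k) i,
            ← Finset.sum_mul, ← Finset.sum_mul]
    _ = (∑ i, ∑ j, ∑ k, W i j k j * A i k)
          + (∑ i, ∑ j, ∑ k, (∑ t, W i j k t * A j t) * delta i k)
          - (∑ i, ∑ j, ∑ k, (∑ t, W i j k t * A i t) * delta j k)
          - (∑ i, ∑ j, ∑ k, W i j k i * A j k) := by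
        simp only [Finset.sum_add_distrib, Finset.sum_sub_distrib]
    _ = 0 := by
        have hA1 : (∑ i, ∑ j, ∑ k, W i j k j * A i k) = 0 := by
          refine Finset.sum_eq_zero fun i _ => ?_
          rw [Finset.sum_comm]
          refine Finset.sum_eq_zero fun k _ => ?_
          rw [← Finset.sum_mul, tr24 h1 h2 htr, zero_mul]
        have hA2 : (∑ i, ∑ j, ∑ k, (∑ t, W i j k t * A j t) * delta i k) = 0 := by
          have e1 : (∑ i, ∑ j, ∑ k, (∑ t, W i j k t * A j t) * delta i k)
              = ∑ i, ∑ j, ∑ t, W i j i t * A j t :=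
            Finset.sum_congr rfl fun i _ => Finset.sum_congr rfl fun j _ =>
              sum_delta_mul (fun k => ∑ t, W i j k t * A j t) i
          rw [e1, Finset.sum_comm]
          refine Finset.sum_eq_zero fun j _ => ?_
          rw [Finset.sum_comm]
          refine Finset.sum_eq_zero fun t _ => ?_
          rw [← Finset.sum_mul, show (∑ i, W i j i t) = ric W j t from rfl, htr, zero_mul]
        have hA3 : (∑ i, ∑ j, ∑ k, (∑ t, W i j k t * A i t) * delta j k) = 0 := by
          have e1 : (∑ i, ∑ j, ∑ k, (∑ t, W i j k t * A i t) * delta j k)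
              = ∑ i, ∑ j, ∑ t, W i j j t * A i t :=
            Finset.sum_congr rfl fun i _ => Finset.sum_congr rfl fun j _ =>
              sum_delta_mul (fun k => ∑ t, W i j k t * A i t) j
          rw [e1]
          refine Finset.sum_eq_zero fun i _ => ?_
          rw [Finset.sum_comm]
          refine Finset.sum_eq_zero fun t _ => ?_
          rw [← Finset.sum_mul, tr23 h1 htr, zero_mul]
        have hA4 : (∑ i, ∑ j, ∑ k, W i j k i * A j k) = 0 := by
          rw [Finset.sum_comm]
          refine Finset.sum_eq_zero fun j _ => ?_
          rw [Finset.sum_comm]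
          refine Finset.sum_eq_zero fun k _ => ?_
          rw [← Finset.sum_mul, tr14 h1 h2 htr, zero_mul]
        rw [hA1, hA2, hA3, hA4]; ring

end AuxLemmas

section SelfAdj
variable {m : ℕ}

lemma nest5 (f : Fin m → Fin m → Fin m → Fin m → Fin m → ℝ) :
    (∑ p : Fin m × Fin m × Fin m × Fin m × Fin m, f p.1 p.2.1 p.2.2.1 p.2.2.2.1 p.2.2.2.2)
    = ∑ i, ∑ j, ∑ k, ∑ w, ∑ s, f i j k w s := by
  simp only [Fintype.sum_prod_type]

lemma nest6 (f : Fin m → Fin m → Fin m → Fin m → Fin m → Fin m → ℝ) :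
    (∑ p : Fin m × Fin m × Fin m × Fin m × Fin m × Fin m,
      f p.1 p.2.1 p.2.2.1 p.2.2.2.1 p.2.2.2.2.1 p.2.2.2.2.2)
    = ∑ i, ∑ j, ∑ k, ∑ w, ∑ s, ∑ t, f i j k w s t := by
  simp only [Fintype.sum_prod_type]

set_option maxHeartbeats 4000000 in
lemma inner4_gamma4_expand (R P Q : Fin m → Fin m → Fin m → Fin m → ℝ) :
    (∑ i, ∑ j, ∑ k, ∑ w, gamma4 R P i j k w * Q i j k w)
    = (∑ i, ∑ j, ∑ k, ∑ w, ∑ s, ric R i s * P s j k w * Q i j k w) + (∑ i, ∑ j, ∑ k, ∑ w, ∑ s, ric R j s * P i s k w * Q i j k w) + (∑ i, ∑ j, ∑ k, ∑ w, ∑ s, ric R k s * P i j s w * Q i j k w) + (∑ i, ∑ j, ∑ k, ∑ w, ∑ s, ric R w s * P i j k s * Q i j k w)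
      - ((∑ i, ∑ j, ∑ k, ∑ w, ∑ s, ∑ t, R i s j t * P s t k w * Q i j k w)
      + (∑ i, ∑ j, ∑ k, ∑ w, ∑ s, ∑ t, R i s k t * P s j t w * Q i j k w)
      + (∑ i, ∑ j, ∑ k, ∑ w, ∑ s, ∑ t, R i s w t * P s j k t * Q i j k w)
      + (∑ i, ∑ j, ∑ k, ∑ w, ∑ s, ∑ t, R j s i t * P t s k w * Q i j k w)
      + (∑ i, ∑ j, ∑ k, ∑ w, ∑ s, ∑ t, R j s k t * P i s t w * Q i j k w)
      + (∑ i, ∑ j, ∑ k, ∑ w, ∑ s, ∑ t, R j s w t * P i s k t * Q i j k w)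
      + (∑ i, ∑ j, ∑ k, ∑ w, ∑ s, ∑ t, R k s i t * P t j s w * Q i j k w)
      + (∑ i, ∑ j, ∑ k, ∑ w, ∑ s, ∑ t, R k s j t * P i t s w * Q i j k w)
      + (∑ i, ∑ j, ∑ k, ∑ w, ∑ s, ∑ t, R k s w t * P i j s t * Q i j k w)
      + (∑ i, ∑ j, ∑ k, ∑ w, ∑ s, ∑ t, R w s i t * P t j k s * Q i j k w)
      + (∑ i, ∑ j, ∑ k, ∑ w, ∑ s, ∑ t, R w s j t * P i t k s * Q i j k w)
      + (∑ i, ∑ j, ∑ k, ∑ w, ∑ s, ∑ t, R w s k t * P i j t s * Q i j k w)) := by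
  have point : ∀ i j k w : Fin m, gamma4 R P i j k w * Q i j k w
      = (∑ s, ric R i s * P s j k w * Q i j k w) + (∑ s, ric R j s * P i s k w * Q i j k w) + (∑ s, ric R k s * P i j s w * Q i j k w) + (∑ s, ric R w s * P i j k s * Q i j k w)
        - ∑ s, ∑ t,
        (R i s j t * P s t k w * Q i j k w +
         R i s k t * P s j t w * Q i j k w +
         R i s w t * P s j k t * Q i j k w +
         R j s i t * P t s k w * Q i j k w +
         R j s k t * P i s t w * Q i j k w +
         R j s w t * P i s k t * Q i j k w +
         R k s i t * P t j s w * Q i j k w +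
         R k s j t * P i t s w * Q i j k w +
         R k s w t * P i j s t * Q i j k w +
         R w s i t * P t j k s * Q i j k w +
         R w s j t * P i t k s * Q i j k w +
         R w s k t * P i j t s * Q i j k w) := by
    intro i j k w
    simp only [gamma4, sub_mul, add_mul, Finset.sum_mul]
  calc (∑ i, ∑ j, ∑ k, ∑ w, gamma4 R P i j k w * Q i j k w)
      = ∑ i, ∑ j, ∑ k, ∑ w, ((∑ s, ric R i s * P s j k w * Q i j k w) + (∑ s, ric R j s * P i s k w * Q i j k w) + (∑ s, ric R k s * P i j s w * Q i j k w) + (∑ s, ric R w s * P i j k s * Q i j k w)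
        - ∑ s, ∑ t,
        (R i s j t * P s t k w * Q i j k w +
         R i s k t * P s j t w * Q i j k w +
         R i s w t * P s j k t * Q i j k w +
         R j s i t * P t s k w * Q i j k w +
         R j s k t * P i s t w * Q i j k w +
         R j s w t * P i s k t * Q i j k w +
         R k s i t * P t j s w * Q i j k w +
         R k s j t * P i t s w * Q i j k w +
         R k s w t * P i j s t * Q i j k w +
         R w s i t * P t j k s * Q i j k w +
         R w s j t * P i t k s * Q i j k w +
         R w s k t * P i j t s * Q i j k w)) :=
        Finset.sum_congr rfl fun i _ => Finset.sum_congr rfl fun j _ =>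
          Finset.sum_congr rfl fun k _ => Finset.sum_congr rfl fun w _ => point i j k w
    _ = (∑ i, ∑ j, ∑ k, ∑ w, ∑ s, ric R i s * P s j k w * Q i j k w) + (∑ i, ∑ j, ∑ k, ∑ w, ∑ s, ric R j s * P i s k w * Q i j k w) + (∑ i, ∑ j, ∑ k, ∑ w, ∑ s, ric R k s * P i j s w * Q i j k w) + (∑ i, ∑ j, ∑ k, ∑ w, ∑ s, ric R w s * P i j k s * Q i j k w)
      - ((∑ i, ∑ j, ∑ k, ∑ w, ∑ s, ∑ t, R i s j t * P s t k w * Q i j k w)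
      + (∑ i, ∑ j, ∑ k, ∑ w, ∑ s, ∑ t, R i s k t * P s j t w * Q i j k w)
      + (∑ i, ∑ j, ∑ k, ∑ w, ∑ s, ∑ t, R i s w t * P s j k t * Q i j k w)
      + (∑ i, ∑ j, ∑ k, ∑ w, ∑ s, ∑ t, R j s i t * P t s k w * Q i j k w)
      + (∑ i, ∑ j, ∑ k, ∑ w, ∑ s, ∑ t, R j s k t * P i s t w * Q i j k w)
      + (∑ i, ∑ j, ∑ k, ∑ w, ∑ s, ∑ t, R j s w t * P i s k t * Q i j k w)
      + (∑ i, ∑ j, ∑ k, ∑ w, ∑ s, ∑ t, R k s i t * P t j s w * Q i j k w)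
      + (∑ i, ∑ j, ∑ k, ∑ w, ∑ s, ∑ t, R k s j t * P i t s w * Q i j k w)
      + (∑ i, ∑ j, ∑ k, ∑ w, ∑ s, ∑ t, R k s w t * P i j s t * Q i j k w)
      + (∑ i, ∑ j, ∑ k, ∑ w, ∑ s, ∑ t, R w s i t * P t j k s * Q i j k w)
      + (∑ i, ∑ j, ∑ k, ∑ w, ∑ s, ∑ t, R w s j t * P i t k s * Q i j k w)
      + (∑ i, ∑ j, ∑ k, ∑ w, ∑ s, ∑ t, R w s k t * P i j t s * Q i j k w)) := by
        simp (config := { maxSteps := 10000000 }) only [Finset.sum_add_distrib, Finset.sum_sub_distrib]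

lemma gamma4_selfadj (R P Q : Fin m → Fin m → Fin m → Fin m → ℝ)
    (h1 : ∀ i j k t, R i j k t = - R j i k t) (h2 : ∀ i j k t, R i j k t = R k t i j) :
    inner4 (gamma4 R P) Q = inner4 P (gamma4 R Q) := by
  have comm : inner4 P (gamma4 R Q) = ∑ i, ∑ j, ∑ k, ∑ w, gamma4 R Q i j k w * P i j k w :=
    Finset.sum_congr rfl fun i _ => Finset.sum_congr rfl fun j _ =>
      Finset.sum_congr rfl fun k _ => Finset.sum_congr rfl fun w _ => mul_comm _ _
  rw [show inner4 (gamma4 R P) Q = ∑ i, ∑ j, ∑ k, ∑ w, gamma4 R P i j k w * Q i j k w from rfl,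
    comm, inner4_gamma4_expand, inner4_gamma4_expand]
  have hT1 : (∑ i, ∑ j, ∑ k, ∑ w, ∑ s, ric R i s * P s j k w * Q i j k w) = (∑ i, ∑ j, ∑ k, ∑ w, ∑ s, ric R i s * Q s j k w * P i j k w) := by
    rw [← nest5, ← nest5]
    refine Fintype.sum_bijective (fun p => (p.2.2.2.2, p.2.1, p.2.2.1, p.2.2.2.1, p.1))
      (Function.Involutive.bijective fun p => rfl) _ _ ?_
    rintro ⟨i, j, k, w, s⟩
    dsimp only
    rw [ric_symm h2 i s]; ring
  have hT2 : (∑ i, ∑ j, ∑ k, ∑ w, ∑ s, ric R j s * P i s k w * Q i j k w) = (∑ i, ∑ j, ∑ k, ∑ w, ∑ s, ric R j s * Q i s k w * P i j k w) := by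
    rw [← nest5, ← nest5]
    refine Fintype.sum_bijective (fun p => (p.1, p.2.2.2.2, p.2.2.1, p.2.2.2.1, p.2.1))
      (Function.Involutive.bijective fun p => rfl) _ _ ?_
    rintro ⟨i, j, k, w, s⟩
    dsimp only
    rw [ric_symm h2 j s]; ring
  have hT3 : (∑ i, ∑ j, ∑ k, ∑ w, ∑ s, ric R k s * P i j s w * Q i j k w) = (∑ i, ∑ j, ∑ k, ∑ w, ∑ s, ric R k s * Q i j s w * P i j k w) := by
    rw [← nest5, ← nest5]
    refine Fintype.sum_bijective (fun p => (p.1, p.2.1, p.2.2.2.2, p.2.2.2.1, p.2.2.1))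
      (Function.Involutive.bijective fun p => rfl) _ _ ?_
    rintro ⟨i, j, k, w, s⟩
    dsimp only
    rw [ric_symm h2 k s]; ring
  have hT4 : (∑ i, ∑ j, ∑ k, ∑ w, ∑ s, ric R w s * P i j k s * Q i j k w) = (∑ i, ∑ j, ∑ k, ∑ w, ∑ s, ric R w s * Q i j k s * P i j k w) := by
    rw [← nest5, ← nest5]
    refine Fintype.sum_bijective (fun p => (p.1, p.2.1, p.2.2.1, p.2.2.2.2, p.2.2.2.1))
      (Function.Involutive.bijective fun p => rfl) _ _ ?_
    rintro ⟨i, j, k, w, s⟩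
    dsimp only
    rw [ric_symm h2 w s]; ring
  have hU1 : (∑ i, ∑ j, ∑ k, ∑ w, ∑ s, ∑ t, R i s j t * P s t k w * Q i j k w) = (∑ i, ∑ j, ∑ k, ∑ w, ∑ s, ∑ t, R i s j t * Q s t k w * P i j k w) := by
    rw [← nest6, ← nest6]
    refine Fintype.sum_bijective (fun p => (p.2.2.2.2.1, p.2.2.2.2.2, p.2.2.1, p.2.2.2.1, p.1, p.2.1))
      (Function.Involutive.bijective fun p => rfl) _ _ ?_
    rintro ⟨i, j, k, w, s, t⟩
    dsimp only
    rw [← Rsym h1 h2 i s j t]; ring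
  have hU2 : (∑ i, ∑ j, ∑ k, ∑ w, ∑ s, ∑ t, R i s k t * P s j t w * Q i j k w) = (∑ i, ∑ j, ∑ k, ∑ w, ∑ s, ∑ t, R i s k t * Q s j t w * P i j k w) := by
    rw [← nest6, ← nest6]
    refine Fintype.sum_bijective (fun p => (p.2.2.2.2.1, p.2.1, p.2.2.2.2.2, p.2.2.2.1, p.1, p.2.2.1))
      (Function.Involutive.bijective fun p => rfl) _ _ ?_
    rintro ⟨i, j, k, w, s, t⟩
    dsimp only
    rw [← Rsym h1 h2 i s k t]; ring
  have hU3 : (∑ i, ∑ j, ∑ k, ∑ w, ∑ s, ∑ t, R i s w t * P s j k t * Q i j k w) = (∑ i, ∑ j, ∑ k, ∑ w, ∑ s, ∑ t, R i s w t * Q s j k t * P i j k w) := by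
    rw [← nest6, ← nest6]
    refine Fintype.sum_bijective (fun p => (p.2.2.2.2.1, p.2.1, p.2.2.1, p.2.2.2.2.2, p.1, p.2.2.2.1))
      (Function.Involutive.bijective fun p => rfl) _ _ ?_
    rintro ⟨i, j, k, w, s, t⟩
    dsimp only
    rw [← Rsym h1 h2 i s w t]; ring
  have hU4 : (∑ i, ∑ j, ∑ k, ∑ w, ∑ s, ∑ t, R j s i t * P t s k w * Q i j k w) = (∑ i, ∑ j, ∑ k, ∑ w, ∑ s, ∑ t, R j s i t * Q t s k w * P i j k w) := by
    rw [← nest6, ← nest6]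
    refine Fintype.sum_bijective (fun p => (p.2.2.2.2.2, p.2.2.2.2.1, p.2.2.1, p.2.2.2.1, p.2.1, p.1))
      (Function.Involutive.bijective fun p => rfl) _ _ ?_
    rintro ⟨i, j, k, w, s, t⟩
    dsimp only
    rw [← Rsym h1 h2 j s i t]; ring
  have hU5 : (∑ i, ∑ j, ∑ k, ∑ w, ∑ s, ∑ t, R j s k t * P i s t w * Q i j k w) = (∑ i, ∑ j, ∑ k, ∑ w, ∑ s, ∑ t, R j s k t * Q i s t w * P i j k w) := by
    rw [← nest6, ← nest6]
    refine Fintype.sum_bijective (fun p => (p.1, p.2.2.2.2.1, p.2.2.2.2.2, p.2.2.2.1, p.2.1, p.2.2.1))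
      (Function.Involutive.bijective fun p => rfl) _ _ ?_
    rintro ⟨i, j, k, w, s, t⟩
    dsimp only
    rw [← Rsym h1 h2 j s k t]; ring
  have hU6 : (∑ i, ∑ j, ∑ k, ∑ w, ∑ s, ∑ t, R j s w t * P i s k t * Q i j k w) = (∑ i, ∑ j, ∑ k, ∑ w, ∑ s, ∑ t, R j s w t * Q i s k t * P i j k w) := by
    rw [← nest6, ← nest6]
    refine Fintype.sum_bijective (fun p => (p.1, p.2.2.2.2.1, p.2.2.1, p.2.2.2.2.2, p.2.1, p.2.2.2.1))
      (Function.Involutive.bijective fun p => rfl) _ _ ?_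
    rintro ⟨i, j, k, w, s, t⟩
    dsimp only
    rw [← Rsym h1 h2 j s w t]; ring
  have hU7 : (∑ i, ∑ j, ∑ k, ∑ w, ∑ s, ∑ t, R k s i t * P t j s w * Q i j k w) = (∑ i, ∑ j, ∑ k, ∑ w, ∑ s, ∑ t, R k s i t * Q t j s w * P i j k w) := by
    rw [← nest6, ← nest6]
    refine Fintype.sum_bijective (fun p => (p.2.2.2.2.2, p.2.1, p.2.2.2.2.1, p.2.2.2.1, p.2.2.1, p.1))
      (Function.Involutive.bijective fun p => rfl) _ _ ?_
    rintro ⟨i, j, k, w, s, t⟩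
    dsimp only
    rw [← Rsym h1 h2 k s i t]; ring
  have hU8 : (∑ i, ∑ j, ∑ k, ∑ w, ∑ s, ∑ t, R k s j t * P i t s w * Q i j k w) = (∑ i, ∑ j, ∑ k, ∑ w, ∑ s, ∑ t, R k s j t * Q i t s w * P i j k w) := by
    rw [← nest6, ← nest6]
    refine Fintype.sum_bijective (fun p => (p.1, p.2.2.2.2.2, p.2.2.2.2.1, p.2.2.2.1, p.2.2.1, p.2.1))
      (Function.Involutive.bijective fun p => rfl) _ _ ?_
    rintro ⟨i, j, k, w, s, t⟩
    dsimp only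
    rw [← Rsym h1 h2 k s j t]; ring
  have hU9 : (∑ i, ∑ j, ∑ k, ∑ w, ∑ s, ∑ t, R k s w t * P i j s t * Q i j k w) = (∑ i, ∑ j, ∑ k, ∑ w, ∑ s, ∑ t, R k s w t * Q i j s t * P i j k w) := by
    rw [← nest6, ← nest6]
    refine Fintype.sum_bijective (fun p => (p.1, p.2.1, p.2.2.2.2.1, p.2.2.2.2.2, p.2.2.1, p.2.2.2.1))
      (Function.Involutive.bijective fun p => rfl) _ _ ?_
    rintro ⟨i, j, k, w, s, t⟩
    dsimp only
    rw [← Rsym h1 h2 k s w t]; ring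
  have hU10 : (∑ i, ∑ j, ∑ k, ∑ w, ∑ s, ∑ t, R w s i t * P t j k s * Q i j k w) = (∑ i, ∑ j, ∑ k, ∑ w, ∑ s, ∑ t, R w s i t * Q t j k s * P i j k w) := by
    rw [← nest6, ← nest6]
    refine Fintype.sum_bijective (fun p => (p.2.2.2.2.2, p.2.1, p.2.2.1, p.2.2.2.2.1, p.2.2.2.1, p.1))
      (Function.Involutive.bijective fun p => rfl) _ _ ?_
    rintro ⟨i, j, k, w, s, t⟩
    dsimp only
    rw [← Rsym h1 h2 w s i t]; ring
  have hU11 : (∑ i, ∑ j, ∑ k, ∑ w, ∑ s, ∑ t, R w s j t * P i t k s * Q i j k w) = (∑ i, ∑ j, ∑ k, ∑ w, ∑ s, ∑ t, R w s j t * Q i t k s * P i j k w) := by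
    rw [← nest6, ← nest6]
    refine Fintype.sum_bijective (fun p => (p.1, p.2.2.2.2.2, p.2.2.1, p.2.2.2.2.1, p.2.2.2.1, p.2.1))
      (Function.Involutive.bijective fun p => rfl) _ _ ?_
    rintro ⟨i, j, k, w, s, t⟩
    dsimp only
    rw [← Rsym h1 h2 w s j t]; ring
  have hU12 : (∑ i, ∑ j, ∑ k, ∑ w, ∑ s, ∑ t, R w s k t * P i j t s * Q i j k w) = (∑ i, ∑ j, ∑ k, ∑ w, ∑ s, ∑ t, R w s k t * Q i j t s * P i j k w) := by
    rw [← nest6, ← nest6]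
    refine Fintype.sum_bijective (fun p => (p.1, p.2.1, p.2.2.2.2.2, p.2.2.2.2.1, p.2.2.2.1, p.2.2.1))
      (Function.Involutive.bijective fun p => rfl) _ _ ?_
    rintro ⟨i, j, k, w, s, t⟩
    dsimp only
    rw [← Rsym h1 h2 w s k t]; ring
  rw [hT1, hT2, hT3, hT4, hU1, hU2, hU3, hU4, hU5, hU6, hU7, hU8, hU9, hU10, hU11, hU12]

end SelfAdj

section LemB
variable {m : ℕ}

lemma SL7 (f : Fin m → ℝ) (c d : Fin m) :
    (∑ s, f s * delta c d) = (∑ s, f s) * delta c d := (Finset.sum_mul ..).symm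

lemma L1 (f : Fin m → Fin m → ℝ) (c : Fin m) :
    (∑ s, ∑ t, f s t * delta t c) = ∑ s, f s c :=
  Finset.sum_congr rfl fun s _ => sum_delta_mul' (f s) c

lemma L2 (f : Fin m → Fin m → ℝ) (c : Fin m) :
    (∑ s, ∑ t, f s t * delta c t) = ∑ s, f s c :=
  Finset.sum_congr rfl fun s _ => sum_delta_mul (f s) c

lemma L3 (f : Fin m → Fin m → ℝ) (c : Fin m) :
    (∑ s, ∑ t, f s t * delta s c) = ∑ t, f c t := by
  rw [Finset.sum_comm]
  exact Finset.sum_congr rfl fun t _ => sum_delta_mul' (fun s => f s t) c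

lemma L4 (f : Fin m → Fin m → ℝ) (c : Fin m) :
    (∑ s, ∑ t, f s t * delta c s) = ∑ t, f c t := by
  rw [Finset.sum_comm]
  exact Finset.sum_congr rfl fun t _ => sum_delta_mul (fun s => f s t) c

lemma L5 (f : Fin m → Fin m → ℝ) :
    (∑ s, ∑ t, f s t * delta s t) = ∑ s, f s s :=
  Finset.sum_congr rfl fun s _ => sum_delta_mul (fun t => f s t) s

lemma L6 (f : Fin m → Fin m → ℝ) :
    (∑ s, ∑ t, f s t * delta t s) = ∑ s, f s s :=
  Finset.sum_congr rfl fun s _ => sum_delta_mul' (fun t => f s t) s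

lemma L7 (f : Fin m → Fin m → ℝ) (c d : Fin m) :
    (∑ s, ∑ t, f s t * delta c d) = (∑ s, ∑ t, f s t) * delta c d := by
  rw [Finset.sum_mul]
  exact Finset.sum_congr rfl fun s _ => (Finset.sum_mul ..).symm

lemma c24 (R : Fin m → Fin m → Fin m → Fin m → ℝ)
    (h1 : ∀ i j k t, R i j k t = - R j i k t) (h2 : ∀ i j k t, R i j k t = R k t i j)
    (a b : Fin m) : (∑ s, R a s b s) = ric R a b :=
  Finset.sum_congr rfl fun s _ => by
    rw [last_antisym h1 h2 a s b s, h1 a s s b, neg_neg]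

lemma diag24 (R : Fin m → Fin m → Fin m → Fin m → ℝ)
    (h1 : ∀ i j k t, R i j k t = - R j i k t) (h2 : ∀ i j k t, R i j k t = R k t i j)
    (a b : Fin m) (x : ℝ) : (∑ s, R a s b s * x) = ric R a b * x := by
  rw [← Finset.sum_mul, c24 R h1 h2]

lemma move4 (R : Fin m → Fin m → Fin m → Fin m → ℝ)
    (h2 : ∀ i j k t, R i j k t = R k t i j)
    (a b c : Fin m) (g : Fin m → ℝ) :
    (∑ t, R a c b t * g t) = ∑ t, R b t a c * g t :=
  Finset.sum_congr rfl fun t _ => by rw [h2 a c b t]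

lemma swap34 (R : Fin m → Fin m → Fin m → Fin m → ℝ)
    (h1 : ∀ i j k t, R i j k t = - R j i k t) (h2 : ∀ i j k t, R i j k t = R k t i j)
    (a b c : Fin m) (g : Fin m → ℝ) :
    (∑ s, R a s b c * g s) = -∑ s, R a s c b * g s := by
  rw [← Finset.sum_neg_distrib]
  exact Finset.sum_congr rfl fun s _ => by rw [last_antisym h1 h2 a s b c]; ring

set_option maxHeartbeats 4000000 in
lemma gamma4_kn_delta (R : Fin m → Fin m → Fin m → Fin m → ℝ)
    (h1 : ∀ i j k t, R i j k t = - R j i k t) (h2 : ∀ i j k t, R i j k t = R k t i j)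
    (E : Fin m → Fin m → ℝ) (i j k w : Fin m) :
    gamma4 R (kn E delta) i j k w = kn (gamma2 R E) delta i j k w := by
  have hG : ∀ a b : Fin m, gamma2 R E a b
      = (∑ s, ric R a s * E s b) + (∑ s, ric R b s * E a s)
        - ((∑ s, ∑ t, R a s b t * E s t) + (∑ s, ∑ t, R b s a t * E t s)) := by
    intro a b
    rw [show gamma2 R E a b = (∑ s, ric R a s * E s b) + (∑ s, ric R b s * E a s)
        - (∑ s, ∑ t, (R a s b t * E s t + R b s a t * E t s)) from rfl]
    rw [show (∑ s, ∑ t, (R a s b t * E s t + R b s a t * E t s))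
        = (∑ s, ∑ t, R a s b t * E s t) + (∑ s, ∑ t, R b s a t * E t s) from by
      simp only [Finset.sum_add_distrib]]
  have hT1 : (∑ s, ric R i s * kn E delta s j k w)
      = (∑ s, ric R i s * E s k) * delta j w + ric R i k * E j w - (∑ s, ric R i s * E s w) * delta j k - ric R i w * E j k := by
    calc (∑ s, ric R i s * kn E delta s j k w)
        = ∑ s, ((ric R i s * E s k) * delta j w + (ric R i s * E j w) * delta s k - (ric R i s * E s w) * delta j k - (ric R i s * E j k) * delta s w) :=
          Finset.sum_congr rfl fun s _ => by simp only [kn]; ring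
      _ = (∑ s, (ric R i s * E s k) * delta j w) + (∑ s, (ric R i s * E j w) * delta s k) - (∑ s, (ric R i s * E s w) * delta j k) - (∑ s, (ric R i s * E j k) * delta s w) := by
          simp only [Finset.sum_add_distrib, Finset.sum_sub_distrib]
      _ = (∑ s, ric R i s * E s k) * delta j w + ric R i k * E j w - (∑ s, ric R i s * E s w) * delta j k - ric R i w * E j k := by
          rw [SL7 (fun s => ric R i s * E s k) j w, sum_delta_mul' (fun s => ric R i s * E j w) k, SL7 (fun s => ric R i s * E s w) j k, sum_delta_mul' (fun s => ric R i s * E j k) w]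
  have hT2 : (∑ s, ric R j s * kn E delta i s k w)
      = ric R j w * E i k + (∑ s, ric R j s * E s w) * delta i k - ric R j k * E i w - (∑ s, ric R j s * E s k) * delta i w := by
    calc (∑ s, ric R j s * kn E delta i s k w)
        = ∑ s, ((ric R j s * E i k) * delta s w + (ric R j s * E s w) * delta i k - (ric R j s * E i w) * delta s k - (ric R j s * E s k) * delta i w) :=
          Finset.sum_congr rfl fun s _ => by simp only [kn]; ring
      _ = (∑ s, (ric R j s * E i k) * delta s w) + (∑ s, (ric R j s * E s w) * delta i k) - (∑ s, (ric R j s * E i w) * delta s k) - (∑ s, (ric R j s * E s k) * delta i w) := by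
          simp only [Finset.sum_add_distrib, Finset.sum_sub_distrib]
      _ = ric R j w * E i k + (∑ s, ric R j s * E s w) * delta i k - ric R j k * E i w - (∑ s, ric R j s * E s k) * delta i w := by
          rw [sum_delta_mul' (fun s => ric R j s * E i k) w, SL7 (fun s => ric R j s * E s w) i k, sum_delta_mul' (fun s => ric R j s * E i w) k, SL7 (fun s => ric R j s * E s k) i w]
  have hT3 : (∑ s, ric R k s * kn E delta i j s w)
      = (∑ s, ric R k s * E i s) * delta j w + ric R k i * E j w - ric R k j * E i w - (∑ s, ric R k s * E j s) * delta i w := by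
    calc (∑ s, ric R k s * kn E delta i j s w)
        = ∑ s, ((ric R k s * E i s) * delta j w + (ric R k s * E j w) * delta i s - (ric R k s * E i w) * delta j s - (ric R k s * E j s) * delta i w) :=
          Finset.sum_congr rfl fun s _ => by simp only [kn]; ring
      _ = (∑ s, (ric R k s * E i s) * delta j w) + (∑ s, (ric R k s * E j w) * delta i s) - (∑ s, (ric R k s * E i w) * delta j s) - (∑ s, (ric R k s * E j s) * delta i w) := by
          simp only [Finset.sum_add_distrib, Finset.sum_sub_distrib]
      _ = (∑ s, ric R k s * E i s) * delta j w + ric R k i * E j w - ric R k j * E i w - (∑ s, ric R k s * E j s) * delta i w := by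
          rw [SL7 (fun s => ric R k s * E i s) j w, sum_delta_mul (fun s => ric R k s * E j w) i, sum_delta_mul (fun s => ric R k s * E i w) j, SL7 (fun s => ric R k s * E j s) i w]
  have hT4 : (∑ s, ric R w s * kn E delta i j k s)
      = ric R w j * E i k + (∑ s, ric R w s * E j s) * delta i k - (∑ s, ric R w s * E i s) * delta j k - ric R w i * E j k := by
    calc (∑ s, ric R w s * kn E delta i j k s)
        = ∑ s, ((ric R w s * E i k) * delta j s + (ric R w s * E j s) * delta i k - (ric R w s * E i s) * delta j k - (ric R w s * E j k) * delta i s) :=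
          Finset.sum_congr rfl fun s _ => by simp only [kn]; ring
      _ = (∑ s, (ric R w s * E i k) * delta j s) + (∑ s, (ric R w s * E j s) * delta i k) - (∑ s, (ric R w s * E i s) * delta j k) - (∑ s, (ric R w s * E j k) * delta i s) := by
          simp only [Finset.sum_add_distrib, Finset.sum_sub_distrib]
      _ = ric R w j * E i k + (∑ s, ric R w s * E j s) * delta i k - (∑ s, ric R w s * E i s) * delta j k - ric R w i * E j k := by
          rw [sum_delta_mul (fun s => ric R w s * E i k) j, SL7 (fun s => ric R w s * E j s) i k, SL7 (fun s => ric R w s * E i s) j k, sum_delta_mul (fun s => ric R w s * E j k) i]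
  have hU1 : (∑ s, ∑ t, R i s j t * kn E delta s t k w)
      = (∑ s, R i s j w * E s k) + (∑ t, R j t i k * E t w) - (∑ s, R i s j k * E s w) - (∑ t, R j t i w * E t k) := by
    calc (∑ s, ∑ t, R i s j t * kn E delta s t k w)
        = ∑ s, ∑ t, ((R i s j t * E s k) * delta t w + (R i s j t * E t w) * delta s k - (R i s j t * E s w) * delta t k - (R i s j t * E t k) * delta s w) :=
          Finset.sum_congr rfl fun s _ => Finset.sum_congr rfl fun t _ => by
            simp only [kn]; ring
      _ = (∑ s, ∑ t, (R i s j t * E s k) * delta t w) + (∑ s, ∑ t, (R i s j t * E t w) * delta s k) - (∑ s, ∑ t, (R i s j t * E s w) * delta t k) - (∑ s, ∑ t, (R i s j t * E t k) * delta s w) := by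
          simp only [Finset.sum_add_distrib, Finset.sum_sub_distrib]
      _ = (∑ s, R i s j w * E s k) + (∑ t, R j t i k * E t w) - (∑ s, R i s j k * E s w) - (∑ t, R j t i w * E t k) := by
          rw [L1 (fun s t => R i s j t * E s k) w, L3 (fun s t => R i s j t * E t w) k, move4 R h2 i j k (fun t => E t w), L1 (fun s t => R i s j t * E s w) k, L3 (fun s t => R i s j t * E t k) w, move4 R h2 i j w (fun t => E t k)]
  have hU2 : (∑ s, ∑ t, R i s k t * kn E delta s j t w)
      = (∑ s, ∑ t, R i s k t * E s t) * delta j w + ric R i k * E j w - (∑ s, R i s k j * E s w) - (∑ t, R k t i w * E j t) := by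
    calc (∑ s, ∑ t, R i s k t * kn E delta s j t w)
        = ∑ s, ∑ t, ((R i s k t * E s t) * delta j w + (R i s k t * E j w) * delta s t - (R i s k t * E s w) * delta j t - (R i s k t * E j t) * delta s w) :=
          Finset.sum_congr rfl fun s _ => Finset.sum_congr rfl fun t _ => by
            simp only [kn]; ring
      _ = (∑ s, ∑ t, (R i s k t * E s t) * delta j w) + (∑ s, ∑ t, (R i s k t * E j w) * delta s t) - (∑ s, ∑ t, (R i s k t * E s w) * delta j t) - (∑ s, ∑ t, (R i s k t * E j t) * delta s w) := by
          simp only [Finset.sum_add_distrib, Finset.sum_sub_distrib]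
      _ = (∑ s, ∑ t, R i s k t * E s t) * delta j w + ric R i k * E j w - (∑ s, R i s k j * E s w) - (∑ t, R k t i w * E j t) := by
          rw [L7 (fun s t => R i s k t * E s t) j w, L5 (fun s t => R i s k t * E j w), diag24 R h1 h2 i k (E j w), L2 (fun s t => R i s k t * E s w) j, L3 (fun s t => R i s k t * E j t) w, move4 R h2 i k w (fun t => E j t)]
  have hU3 : (∑ s, ∑ t, R i s w t * kn E delta s j k t)
      = (∑ s, R i s w j * E s k) + (∑ t, R w t i k * E j t) - (∑ s, ∑ t, R i s w t * E s t) * delta j k - ric R i w * E j k := by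
    calc (∑ s, ∑ t, R i s w t * kn E delta s j k t)
        = ∑ s, ∑ t, ((R i s w t * E s k) * delta j t + (R i s w t * E j t) * delta s k - (R i s w t * E s t) * delta j k - (R i s w t * E j k) * delta s t) :=
          Finset.sum_congr rfl fun s _ => Finset.sum_congr rfl fun t _ => by
            simp only [kn]; ring
      _ = (∑ s, ∑ t, (R i s w t * E s k) * delta j t) + (∑ s, ∑ t, (R i s w t * E j t) * delta s k) - (∑ s, ∑ t, (R i s w t * E s t) * delta j k) - (∑ s, ∑ t, (R i s w t * E j k) * delta s t) := by
          simp only [Finset.sum_add_distrib, Finset.sum_sub_distrib]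
      _ = (∑ s, R i s w j * E s k) + (∑ t, R w t i k * E j t) - (∑ s, ∑ t, R i s w t * E s t) * delta j k - ric R i w * E j k := by
          rw [L2 (fun s t => R i s w t * E s k) j, L3 (fun s t => R i s w t * E j t) k, move4 R h2 i w k (fun t => E j t), L7 (fun s t => R i s w t * E s t) j k, L5 (fun s t => R i s w t * E j k), diag24 R h1 h2 i w (E j k)]
  have hU4 : (∑ s, ∑ t, R j s i t * kn E delta t s k w)
      = (∑ t, R i t j w * E t k) + (∑ s, R j s i k * E s w) - (∑ t, R i t j k * E t w) - (∑ s, R j s i w * E s k) := by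
    calc (∑ s, ∑ t, R j s i t * kn E delta t s k w)
        = ∑ s, ∑ t, ((R j s i t * E t k) * delta s w + (R j s i t * E s w) * delta t k - (R j s i t * E t w) * delta s k - (R j s i t * E s k) * delta t w) :=
          Finset.sum_congr rfl fun s _ => Finset.sum_congr rfl fun t _ => by
            simp only [kn]; ring
      _ = (∑ s, ∑ t, (R j s i t * E t k) * delta s w) + (∑ s, ∑ t, (R j s i t * E s w) * delta t k) - (∑ s, ∑ t, (R j s i t * E t w) * delta s k) - (∑ s, ∑ t, (R j s i t * E s k) * delta t w) := by
          simp only [Finset.sum_add_distrib, Finset.sum_sub_distrib]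
      _ = (∑ t, R i t j w * E t k) + (∑ s, R j s i k * E s w) - (∑ t, R i t j k * E t w) - (∑ s, R j s i w * E s k) := by
          rw [L3 (fun s t => R j s i t * E t k) w, move4 R h2 j i w (fun t => E t k), L1 (fun s t => R j s i t * E s w) k, L3 (fun s t => R j s i t * E t w) k, move4 R h2 j i k (fun t => E t w), L1 (fun s t => R j s i t * E s k) w]
  have hU5 : (∑ s, ∑ t, R j s k t * kn E delta i s t w)
      = (∑ t, R k t j w * E i t) + (∑ s, R j s k i * E s w) - ric R j k * E i w - (∑ s, ∑ t, R j s k t * E s t) * delta i w := by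
    calc (∑ s, ∑ t, R j s k t * kn E delta i s t w)
        = ∑ s, ∑ t, ((R j s k t * E i t) * delta s w + (R j s k t * E s w) * delta i t - (R j s k t * E i w) * delta s t - (R j s k t * E s t) * delta i w) :=
          Finset.sum_congr rfl fun s _ => Finset.sum_congr rfl fun t _ => by
            simp only [kn]; ring
      _ = (∑ s, ∑ t, (R j s k t * E i t) * delta s w) + (∑ s, ∑ t, (R j s k t * E s w) * delta i t) - (∑ s, ∑ t, (R j s k t * E i w) * delta s t) - (∑ s, ∑ t, (R j s k t * E s t) * delta i w) := by
          simp only [Finset.sum_add_distrib, Finset.sum_sub_distrib]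
      _ = (∑ t, R k t j w * E i t) + (∑ s, R j s k i * E s w) - ric R j k * E i w - (∑ s, ∑ t, R j s k t * E s t) * delta i w := by
          rw [L3 (fun s t => R j s k t * E i t) w, move4 R h2 j k w (fun t => E i t), L2 (fun s t => R j s k t * E s w) i, L5 (fun s t => R j s k t * E i w), diag24 R h1 h2 j k (E i w), L7 (fun s t => R j s k t * E s t) i w]
  have hU6 : (∑ s, ∑ t, R j s w t * kn E delta i s k t)
      = ric R j w * E i k + (∑ s, ∑ t, R j s w t * E s t) * delta i k - (∑ t, R w t j k * E i t) - (∑ s, R j s w i * E s k) := by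
    calc (∑ s, ∑ t, R j s w t * kn E delta i s k t)
        = ∑ s, ∑ t, ((R j s w t * E i k) * delta s t + (R j s w t * E s t) * delta i k - (R j s w t * E i t) * delta s k - (R j s w t * E s k) * delta i t) :=
          Finset.sum_congr rfl fun s _ => Finset.sum_congr rfl fun t _ => by
            simp only [kn]; ring
      _ = (∑ s, ∑ t, (R j s w t * E i k) * delta s t) + (∑ s, ∑ t, (R j s w t * E s t) * delta i k) - (∑ s, ∑ t, (R j s w t * E i t) * delta s k) - (∑ s, ∑ t, (R j s w t * E s k) * delta i t) := by
          simp only [Finset.sum_add_distrib, Finset.sum_sub_distrib]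
      _ = ric R j w * E i k + (∑ s, ∑ t, R j s w t * E s t) * delta i k - (∑ t, R w t j k * E i t) - (∑ s, R j s w i * E s k) := by
          rw [L5 (fun s t => R j s w t * E i k), diag24 R h1 h2 j w (E i k), L7 (fun s t => R j s w t * E s t) i k, L3 (fun s t => R j s w t * E i t) k, move4 R h2 j w k (fun t => E i t), L2 (fun s t => R j s w t * E s k) i]
  have hU7 : (∑ s, ∑ t, R k s i t * kn E delta t j s w)
      = (∑ s, ∑ t, R k s i t * E t s) * delta j w + ric R k i * E j w - (∑ t, R i t k j * E t w) - (∑ s, R k s i w * E j s) := by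
    calc (∑ s, ∑ t, R k s i t * kn E delta t j s w)
        = ∑ s, ∑ t, ((R k s i t * E t s) * delta j w + (R k s i t * E j w) * delta t s - (R k s i t * E t w) * delta j s - (R k s i t * E j s) * delta t w) :=
          Finset.sum_congr rfl fun s _ => Finset.sum_congr rfl fun t _ => by
            simp only [kn]; ring
      _ = (∑ s, ∑ t, (R k s i t * E t s) * delta j w) + (∑ s, ∑ t, (R k s i t * E j w) * delta t s) - (∑ s, ∑ t, (R k s i t * E t w) * delta j s) - (∑ s, ∑ t, (R k s i t * E j s) * delta t w) := by
          simp only [Finset.sum_add_distrib, Finset.sum_sub_distrib]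
      _ = (∑ s, ∑ t, R k s i t * E t s) * delta j w + ric R k i * E j w - (∑ t, R i t k j * E t w) - (∑ s, R k s i w * E j s) := by
          rw [L7 (fun s t => R k s i t * E t s) j w, L6 (fun s t => R k s i t * E j w), diag24 R h1 h2 k i (E j w), L4 (fun s t => R k s i t * E t w) j, move4 R h2 k i j (fun t => E t w), L1 (fun s t => R k s i t * E j s) w]
  have hU8 : (∑ s, ∑ t, R k s j t * kn E delta i t s w)
      = (∑ s, R k s j w * E i s) + (∑ t, R j t k i * E t w) - ric R k j * E i w - (∑ s, ∑ t, R k s j t * E t s) * delta i w := by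
    calc (∑ s, ∑ t, R k s j t * kn E delta i t s w)
        = ∑ s, ∑ t, ((R k s j t * E i s) * delta t w + (R k s j t * E t w) * delta i s - (R k s j t * E i w) * delta t s - (R k s j t * E t s) * delta i w) :=
          Finset.sum_congr rfl fun s _ => Finset.sum_congr rfl fun t _ => by
            simp only [kn]; ring
      _ = (∑ s, ∑ t, (R k s j t * E i s) * delta t w) + (∑ s, ∑ t, (R k s j t * E t w) * delta i s) - (∑ s, ∑ t, (R k s j t * E i w) * delta t s) - (∑ s, ∑ t, (R k s j t * E t s) * delta i w) := by
          simp only [Finset.sum_add_distrib, Finset.sum_sub_distrib]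
      _ = (∑ s, R k s j w * E i s) + (∑ t, R j t k i * E t w) - ric R k j * E i w - (∑ s, ∑ t, R k s j t * E t s) * delta i w := by
          rw [L1 (fun s t => R k s j t * E i s) w, L4 (fun s t => R k s j t * E t w) i, move4 R h2 k j i (fun t => E t w), L6 (fun s t => R k s j t * E i w), diag24 R h1 h2 k j (E i w), L7 (fun s t => R k s j t * E t s) i w]
  have hU9 : (∑ s, ∑ t, R k s w t * kn E delta i j s t)
      = (∑ s, R k s w j * E i s) + (∑ t, R w t k i * E j t) - (∑ t, R w t k j * E i t) - (∑ s, R k s w i * E j s) := by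
    calc (∑ s, ∑ t, R k s w t * kn E delta i j s t)
        = ∑ s, ∑ t, ((R k s w t * E i s) * delta j t + (R k s w t * E j t) * delta i s - (R k s w t * E i t) * delta j s - (R k s w t * E j s) * delta i t) :=
          Finset.sum_congr rfl fun s _ => Finset.sum_congr rfl fun t _ => by
            simp only [kn]; ring
      _ = (∑ s, ∑ t, (R k s w t * E i s) * delta j t) + (∑ s, ∑ t, (R k s w t * E j t) * delta i s) - (∑ s, ∑ t, (R k s w t * E i t) * delta j s) - (∑ s, ∑ t, (R k s w t * E j s) * delta i t) := by
          simp only [Finset.sum_add_distrib, Finset.sum_sub_distrib]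
      _ = (∑ s, R k s w j * E i s) + (∑ t, R w t k i * E j t) - (∑ t, R w t k j * E i t) - (∑ s, R k s w i * E j s) := by
          rw [L2 (fun s t => R k s w t * E i s) j, L4 (fun s t => R k s w t * E j t) i, move4 R h2 k w i (fun t => E j t), L4 (fun s t => R k s w t * E i t) j, move4 R h2 k w j (fun t => E i t), L2 (fun s t => R k s w t * E j s) i]
  have hU10 : (∑ s, ∑ t, R w s i t * kn E delta t j k s)
      = (∑ t, R i t w j * E t k) + (∑ s, R w s i k * E j s) - (∑ s, ∑ t, R w s i t * E t s) * delta j k - ric R w i * E j k := by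
    calc (∑ s, ∑ t, R w s i t * kn E delta t j k s)
        = ∑ s, ∑ t, ((R w s i t * E t k) * delta j s + (R w s i t * E j s) * delta t k - (R w s i t * E t s) * delta j k - (R w s i t * E j k) * delta t s) :=
          Finset.sum_congr rfl fun s _ => Finset.sum_congr rfl fun t _ => by
            simp only [kn]; ring
      _ = (∑ s, ∑ t, (R w s i t * E t k) * delta j s) + (∑ s, ∑ t, (R w s i t * E j s) * delta t k) - (∑ s, ∑ t, (R w s i t * E t s) * delta j k) - (∑ s, ∑ t, (R w s i t * E j k) * delta t s) := by
          simp only [Finset.sum_add_distrib, Finset.sum_sub_distrib]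
      _ = (∑ t, R i t w j * E t k) + (∑ s, R w s i k * E j s) - (∑ s, ∑ t, R w s i t * E t s) * delta j k - ric R w i * E j k := by
          rw [L4 (fun s t => R w s i t * E t k) j, move4 R h2 w i j (fun t => E t k), L1 (fun s t => R w s i t * E j s) k, L7 (fun s t => R w s i t * E t s) j k, L6 (fun s t => R w s i t * E j k), diag24 R h1 h2 w i (E j k)]
  have hU11 : (∑ s, ∑ t, R w s j t * kn E delta i t k s)
      = ric R w j * E i k + (∑ s, ∑ t, R w s j t * E t s) * delta i k - (∑ s, R w s j k * E i s) - (∑ t, R j t w i * E t k) := by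
    calc (∑ s, ∑ t, R w s j t * kn E delta i t k s)
        = ∑ s, ∑ t, ((R w s j t * E i k) * delta t s + (R w s j t * E t s) * delta i k - (R w s j t * E i s) * delta t k - (R w s j t * E t k) * delta i s) :=
          Finset.sum_congr rfl fun s _ => Finset.sum_congr rfl fun t _ => by
            simp only [kn]; ring
      _ = (∑ s, ∑ t, (R w s j t * E i k) * delta t s) + (∑ s, ∑ t, (R w s j t * E t s) * delta i k) - (∑ s, ∑ t, (R w s j t * E i s) * delta t k) - (∑ s, ∑ t, (R w s j t * E t k) * delta i s) := by
          simp only [Finset.sum_add_distrib, Finset.sum_sub_distrib]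
      _ = ric R w j * E i k + (∑ s, ∑ t, R w s j t * E t s) * delta i k - (∑ s, R w s j k * E i s) - (∑ t, R j t w i * E t k) := by
          rw [L6 (fun s t => R w s j t * E i k), diag24 R h1 h2 w j (E i k), L7 (fun s t => R w s j t * E t s) i k, L1 (fun s t => R w s j t * E i s) k, L4 (fun s t => R w s j t * E t k) i, move4 R h2 w j i (fun t => E t k)]
  have hU12 : (∑ s, ∑ t, R w s k t * kn E delta i j t s)
      = (∑ t, R k t w j * E i t) + (∑ s, R w s k i * E j s) - (∑ s, R w s k j * E i s) - (∑ t, R k t w i * E j t) := by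
    calc (∑ s, ∑ t, R w s k t * kn E delta i j t s)
        = ∑ s, ∑ t, ((R w s k t * E i t) * delta j s + (R w s k t * E j s) * delta i t - (R w s k t * E i s) * delta j t - (R w s k t * E j t) * delta i s) :=
          Finset.sum_congr rfl fun s _ => Finset.sum_congr rfl fun t _ => by
            simp only [kn]; ring
      _ = (∑ s, ∑ t, (R w s k t * E i t) * delta j s) + (∑ s, ∑ t, (R w s k t * E j s) * delta i t) - (∑ s, ∑ t, (R w s k t * E i s) * delta j t) - (∑ s, ∑ t, (R w s k t * E j t) * delta i s) := by
          simp only [Finset.sum_add_distrib, Finset.sum_sub_distrib]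
      _ = (∑ t, R k t w j * E i t) + (∑ s, R w s k i * E j s) - (∑ s, R w s k j * E i s) - (∑ t, R k t w i * E j t) := by
          rw [L4 (fun s t => R w s k t * E i t) j, move4 R h2 w k j (fun t => E i t), L2 (fun s t => R w s k t * E j s) i, L2 (fun s t => R w s k t * E i s) j, L4 (fun s t => R w s k t * E j t) i, move4 R h2 w k i (fun t => E j t)]
  have hs1 : (∑ s, R i s j w * E s k) = -∑ s, R i s w j * E s k :=
    swap34 R h1 h2 i j w (fun s => E s k)
  have hs2 : (∑ s, R i s j k * E s w) = -∑ s, R i s k j * E s w :=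
    swap34 R h1 h2 i j k (fun s => E s w)
  have hs3 : (∑ s, R j s i k * E s w) = -∑ s, R j s k i * E s w :=
    swap34 R h1 h2 j i k (fun s => E s w)
  have hs4 : (∑ s, R j s i w * E s k) = -∑ s, R j s w i * E s k :=
    swap34 R h1 h2 j i w (fun s => E s k)
  have hs5 : (∑ s, R k s i w * E j s) = -∑ s, R k s w i * E j s :=
    swap34 R h1 h2 k i w (fun s => E j s)
  have hs6 : (∑ s, R w s i k * E j s) = -∑ s, R w s k i * E j s :=
    swap34 R h1 h2 w i k (fun s => E j s)
  have hs7 : (∑ s, R k s j w * E i s) = -∑ s, R k s w j * E i s :=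
    swap34 R h1 h2 k j w (fun s => E i s)
  have hs8 : (∑ s, R w s j k * E i s) = -∑ s, R w s k j * E i s :=
    swap34 R h1 h2 w j k (fun s => E i s)
  calc gamma4 R (kn E delta) i j k w
      = (∑ s, ric R i s * kn E delta s j k w) + (∑ s, ric R j s * kn E delta i s k w) + (∑ s, ric R k s * kn E delta i j s w) + (∑ s, ric R w s * kn E delta i j k s)
        - ∑ s, ∑ t,
          (R i s j t * kn E delta s t k w +
          R i s k t * kn E delta s j t w +
          R i s w t * kn E delta s j k t +
          R j s i t * kn E delta t s k w +
          R j s k t * kn E delta i s t w +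
          R j s w t * kn E delta i s k t +
          R k s i t * kn E delta t j s w +
          R k s j t * kn E delta i t s w +
          R k s w t * kn E delta i j s t +
          R w s i t * kn E delta t j k s +
          R w s j t * kn E delta i t k s +
          R w s k t * kn E delta i j t s) := rfl
    _ = (∑ s, ric R i s * kn E delta s j k w) + (∑ s, ric R j s * kn E delta i s k w) + (∑ s, ric R k s * kn E delta i j s w) + (∑ s, ric R w s * kn E delta i j k s)
        - ((∑ s, ∑ t, R i s j t * kn E delta s t k w) + (∑ s, ∑ t, R i s k t * kn E delta s j t w) + (∑ s, ∑ t, R i s w t * kn E delta s j k t) + (∑ s, ∑ t, R j s i t * kn E delta t s k w) + (∑ s, ∑ t, R j s k t * kn E delta i s t w) + (∑ s, ∑ t, R j s w t * kn E delta i s k t) + (∑ s, ∑ t, R k s i t * kn E delta t j s w) + (∑ s, ∑ t, R k s j t * kn E delta i t s w) + (∑ s, ∑ t, R k s w t * kn E delta i j s t) + (∑ s, ∑ t, R w s i t * kn E delta t j k s) + (∑ s, ∑ t, R w s j t * kn E delta i t k s) + (∑ s, ∑ t, R w s k t * kn E delta i j t s)) := by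
        rw [show (∑ s, ∑ t,
          (R i s j t * kn E delta s t k w +
          R i s k t * kn E delta s j t w +
          R i s w t * kn E delta s j k t +
          R j s i t * kn E delta t s k w +
          R j s k t * kn E delta i s t w +
          R j s w t * kn E delta i s k t +
          R k s i t * kn E delta t j s w +
          R k s j t * kn E delta i t s w +
          R k s w t * kn E delta i j s t +
          R w s i t * kn E delta t j k s +
          R w s j t * kn E delta i t k s +
          R w s k t * kn E delta i j t s))
          = (∑ s, ∑ t, R i s j t * kn E delta s t k w) + (∑ s, ∑ t, R i s k t * kn E delta s j t w) + (∑ s, ∑ t, R i s w t * kn E delta s j k t) + (∑ s, ∑ t, R j s i t * kn E delta t s k w) + (∑ s, ∑ t, R j s k t * kn E delta i s t w) + (∑ s, ∑ t, R j s w t * kn E delta i s k t) + (∑ s, ∑ t, R k s i t * kn E delta t j s w) + (∑ s, ∑ t, R k s j t * kn E delta i t s w) + (∑ s, ∑ t, R k s w t * kn E delta i j s t) + (∑ s, ∑ t, R w s i t * kn E delta t j k s) + (∑ s, ∑ t, R w s j t * kn E delta i t k s) + (∑ s, ∑ t, R w s k t * kn E delta i j t s) from by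
          simp only [Finset.sum_add_distrib]]
    _ = kn (gamma2 R E) delta i j k w := by
        rw [hT1, hT2, hT3, hT4, hU1, hU2, hU3, hU4, hU5, hU6, hU7, hU8, hU9, hU10, hU11,
          hU12,
          show kn (gamma2 R E) delta i j k w
            = gamma2 R E i k * delta j w + gamma2 R E j w * delta i k
              - gamma2 R E i w * delta j k - gamma2 R E j k * delta i w from rfl,
          hG i k, hG j w, hG i w, hG j k, hs1, hs2, hs3, hs4, hs5, hs6, hs7, hs8]
        ring

end LemB

/-- If `W` is a totally traceless algebraic curvature tensor and `E` is any
symmetric matrix, then `⟨ΓW, E⊙δ⟩ = 0`. -/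
theorem statement5 (m : ℕ) (hm : 2 ≤ m)
    (R : Fin m → Fin m → Fin m → Fin m → ℝ) (hR : IsACT R)
    (W : Fin m → Fin m → Fin m → Fin m → ℝ) (hW : IsACT W)
    (hWtr : ∀ i j, ric W i j = 0)
    (E : Fin m → Fin m → ℝ) (hE : ∀ i j, E i j = E j i) :
    inner4 (gamma4 R W) (kn E delta) = 0 := by
  obtain ⟨h1, h2, -⟩ := hR
  obtain ⟨w1, w2, -⟩ := hW
  have hfun : gamma4 R (kn E delta) = kn (gamma2 R E) delta :=
    funext fun i => funext fun j => funext fun k => funext fun w =>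
      gamma4_kn_delta R h1 h2 E i j k w
  calc inner4 (gamma4 R W) (kn E delta)
      = inner4 W (gamma4 R (kn E delta)) := gamma4_selfadj R W (kn E delta) h1 h2
    _ = inner4 W (kn (gamma2 R E) delta) := by rw [hfun]
    _ = 0 := inner4_kn_delta_eq_zero w1 w2 hWtr _

end

end Paper
end

section
/- Let m ≥ 2 and let R be an algebraic curvature tensor on ℝ^m with associated Lichnerowicz operator Γ. For any symmetric matrices E and Ẽ on ℝ^m one has ⟨Γ(E⊙δ), Ẽ⊙δ⟩ = 4(m−2)·⟨ΓE, Ẽ⟩, where on the left Γ acts on 4-covariant tensors, on the right Γ acts on 2-covariant tensors, and ⊙ is the Kulkarni–Nomizu product. -/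
open Finset

namespace Paper

noncomputable section

variable {m : ℕ}

theorem aux_innerKN (A B : Fin m → Fin m → ℝ) :
    inner4 (kn A delta) (kn B delta)
      = 4 * ((m : ℝ) - 2) * inner2 A B + 4 * (∑ i, A i i) * (∑ i, B i i) := by
  have h1 : (∑ x : Fin m, ∑ _x1 : Fin m, ∑ x2 : Fin m, A x x2 * B x x2)
      = (m : ℝ) * ∑ x : Fin m, ∑ x2 : Fin m, A x x2 * B x x2 := by
    simp [Finset.sum_const, Finset.card_univ, nsmul_eq_mul, Finset.mul_sum]
  have h2 : (∑ _x : Fin m, ∑ x : Fin m, ∑ x1 : Fin m, A x x1 * B x x1)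
      = (m : ℝ) * ∑ x : Fin m, ∑ x2 : Fin m, A x x2 * B x x2 := by
    simp [Finset.sum_const, Finset.card_univ, nsmul_eq_mul]
  have h3 : (∑ x : Fin m, ∑ x1 : Fin m, A x1 x1 * B x x)
      = (∑ i, A i i) * (∑ i, B i i) := by
    rw [Finset.sum_mul_sum, Finset.sum_comm]
  have h4 : (∑ x : Fin m, ∑ x1 : Fin m, A x x * B x1 x1)
      = (∑ i, A i i) * (∑ i, B i i) := by
    rw [Finset.sum_mul_sum]
  have h5 : (∑ x : Fin m, ∑ x1 : Fin m, A x1 x * B x1 x)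
      = ∑ x : Fin m, ∑ x1 : Fin m, A x x1 * B x x1 := Finset.sum_comm
  simp only [inner4, inner2, kn, delta, mul_ite, ite_mul, mul_one, mul_zero, one_mul, zero_mul,
    mul_add, mul_sub, add_mul, sub_mul, Finset.sum_add_distrib, Finset.sum_sub_distrib,
    Finset.sum_ite_irrel, Finset.sum_ite_eq, Finset.sum_ite_eq', Finset.mem_univ, if_true,
    Finset.sum_const_zero, add_zero, zero_add, sub_zero, zero_sub, Finset.sum_neg_distrib]
  rw [h1, h2, h3, h4, h5]
  ring

theorem aux_key (R : Fin m → Fin m → Fin m → Fin m → ℝ) (hR : IsACT R)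
    (E : Fin m → Fin m → ℝ) (i j k w : Fin m) :
    gamma4 R (kn E delta) i j k w = kn (gamma2 R E) delta i j k w := by
  obtain ⟨h1, hp, hB⟩ := hR
  have h3 : ∀ a b c d, R a b c d = - R a b d c := by
    intro a b c d
    rw [hp a b c d, h1 c d a b, hp d c a b]
  have h4 : ∀ a s b, R a s b s = R s a s b := by
    intro a s b
    have e1 := hB a s b s
    have e2 : R a b s s = - R a b s s := h3 a b s s
    have e3 : R a s s b = - R s a s b := h1 a s s b
    linarith
  have pairF1 : ∀ (a b c : Fin m) (e : Fin m → ℝ),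
      ((∑ x, R a b c x * e x) + (∑ x, R b a c x * e x)) = 0 := by
    intro a b c e
    rw [← Finset.sum_add_distrib]
    apply Finset.sum_eq_zero
    intro x _
    rw [h1 a b c x]; ring
  have pairF3 : ∀ (a b c : Fin m) (e : Fin m → ℝ),
      ((∑ x, R a x b c * e x) + (∑ x, R a x c b * e x)) = 0 := by
    intro a b c e
    rw [← Finset.sum_add_distrib]
    apply Finset.sum_eq_zero
    intro x _
    rw [h3 a x b c]; ring
  have trEq : ∀ (a b : Fin m) (e : ℝ),
      ((∑ x, R a x b x * e) + (∑ x, R b x a x * e))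
        = ric R a b * e + ric R b a * e := by
    intro a b e
    rw [ric, ric, Finset.sum_mul, Finset.sum_mul, ← Finset.sum_add_distrib,
      ← Finset.sum_add_distrib]
    apply Finset.sum_congr rfl
    intro x _
    rw [h4 a x b, h4 b x a]
  have ite_split : ∀ (c : Prop) [Decidable c] (a b : ℝ),
      (if c then a + b else 0) = (if c then a else 0) + (if c then b else 0) := by
    intro c _ a b; split <;> simp
  have ite_neg' : ∀ (c : Prop) [Decidable c] (a : ℝ),
      (if c then -a else 0) = -(if c then a else 0) := by
    intro c _ a; split <;> simp
  simp only [gamma4, gamma2, kn, delta, mul_ite, ite_mul, mul_one, mul_zero, one_mul, zero_mul,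
    mul_add, mul_sub, add_mul, sub_mul, Finset.sum_add_distrib, Finset.sum_sub_distrib,
    Finset.sum_ite_irrel, Finset.sum_ite_eq, Finset.sum_ite_eq', Finset.mem_univ, if_true,
    Finset.sum_const_zero, add_zero, zero_add, sub_zero, zero_sub]
  simp only [sub_eq_add_neg, neg_add, ite_split, ite_neg']
  linarith [pairF1 j k w (fun x => E i x), pairF1 j w k (fun x => E i x),
    pairF3 k j w (fun x => E i x), pairF3 w j k (fun x => E i x),
    pairF1 i k w (fun x => E j x), pairF1 i w k (fun x => E j x),
    pairF3 k i w (fun x => E j x), pairF3 w i k (fun x => E j x),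
    pairF3 i j w (fun x => E x k), pairF1 i w j (fun x => E x k),
    pairF3 j i w (fun x => E x k), pairF1 j w i (fun x => E x k),
    pairF1 i k j (fun x => E x w), pairF3 i j k (fun x => E x w),
    pairF1 j k i (fun x => E x w), pairF3 j i k (fun x => E x w),
    trEq j w (E i k), trEq j k (E i w), trEq i w (E j k), trEq i k (E j w)]

theorem aux_trace0 (R : Fin m → Fin m → Fin m → Fin m → ℝ) (E : Fin m → Fin m → ℝ) :
    (∑ i, gamma2 R E i i) = 0 := by
  have hcomm : ∀ g : Fin m → Fin m → Fin m → ℝ,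
      (∑ i, ∑ s, ∑ t, g i s t) = ∑ s, ∑ t, ∑ i, g i s t := by
    intro g
    rw [Finset.sum_comm]
    exact Finset.sum_congr rfl fun s _ => Finset.sum_comm
  simp only [gamma2, Finset.sum_sub_distrib, Finset.sum_add_distrib]
  have hC : (∑ x : Fin m, ∑ x1 : Fin m, ∑ x2 : Fin m, R x x1 x x2 * E x1 x2)
      = ∑ s : Fin m, ∑ t : Fin m, ric R s t * E s t := by
    rw [hcomm]
    exact Finset.sum_congr rfl fun s _ => Finset.sum_congr rfl fun t _ => by
      rw [ric, Finset.sum_mul]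
  have hD : (∑ x : Fin m, ∑ x1 : Fin m, ∑ x2 : Fin m, R x x1 x x2 * E x2 x1)
      = ∑ s : Fin m, ∑ t : Fin m, ric R s t * E t s := by
    rw [hcomm]
    exact Finset.sum_congr rfl fun s _ => Finset.sum_congr rfl fun t _ => by
      rw [ric, Finset.sum_mul]
  linarith [hC, hD]

/-- For symmetric matrices `E, Ẽ`:
`⟨Γ(E⊙δ), Ẽ⊙δ⟩ = 4(m−2)·⟨ΓE, Ẽ⟩`. -/
theorem statement7 (m : ℕ) (hm : 2 ≤ m)
    (R : Fin m → Fin m → Fin m → Fin m → ℝ) (hR : IsACT R)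
    (E E' : Fin m → Fin m → ℝ) (hE : ∀ i j, E i j = E j i) (hE' : ∀ i j, E' i j = E' j i) :
    inner4 (gamma4 R (kn E delta)) (kn E' delta)
      = 4 * ((m : ℝ) - 2) * inner2 (gamma2 R E) E' := by
  have step1 : inner4 (gamma4 R (kn E delta)) (kn E' delta)
      = inner4 (kn (gamma2 R E) delta) (kn E' delta) := by
    unfold inner4
    refine Finset.sum_congr rfl fun i _ => Finset.sum_congr rfl fun j _ =>
      Finset.sum_congr rfl fun k _ => Finset.sum_congr rfl fun t _ => ?_
    rw [aux_key R hR E i j k t]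
  rw [step1, aux_innerKN, aux_trace0]
  ring

end

end Paper
end

section
/- Let m ≥ 3 and let T be an algebraic curvature tensor on ℝ^m with pseudo-projective tensor P_T. Then the associated tensor T̂ satisfies |T̂|² = 2(m−1)·|P_T|². In particular, if T is totally traceless (Σ_k T_{kikj} = 0 for all i,j) then |T̂|² = 2(m−1)·|T|². -/
open Finset

namespace Paper

noncomputable section

variable {m : ℕ}

section Aux
variable {m : ℕ}

-- bound-variable permutation helpers
lemma sAB (f : Fin m → Fin m → Fin m → Fin m → ℝ) :
    (∑ a, ∑ b, ∑ c, ∑ d, f a b c d) = ∑ a, ∑ b, ∑ c, ∑ d, f b a c d :=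
  Finset.sum_comm

lemma sBC (f : Fin m → Fin m → Fin m → Fin m → ℝ) :
    (∑ a, ∑ b, ∑ c, ∑ d, f a b c d) = ∑ a, ∑ b, ∑ c, ∑ d, f a c b d :=
  Finset.sum_congr rfl fun _ _ => Finset.sum_comm

lemma sCD (f : Fin m → Fin m → Fin m → Fin m → ℝ) :
    (∑ a, ∑ b, ∑ c, ∑ d, f a b c d) = ∑ a, ∑ b, ∑ c, ∑ d, f a b d c :=
  Finset.sum_congr rfl fun _ _ => Finset.sum_congr rfl fun _ _ => Finset.sum_comm

variable (T : Fin m → Fin m → Fin m → Fin m → ℝ)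

lemma R2_canon :
    (∑ p, ∑ q, ∑ a, ∑ c, T a p a q * T c p c q) = inner2 (ric T) (ric T) := by
  unfold inner2 ric
  refine Finset.sum_congr rfl fun p _ => Finset.sum_congr rfl fun q _ => ?_
  rw [Finset.sum_mul_sum]

end Aux
section Aux2
variable {m : ℕ} (T : Fin m → Fin m → Fin m → Fin m → ℝ)
variable (ha : ∀ i j k t, T i j k t = - T j i k t)
variable (hp : ∀ i j k t, T i j k t = T k t i j)
variable (hb : ∀ i j k t, T i j k t + T i t j k + T i k t j = 0)

include ha hp in
lemma t34 : ∀ i j k t, T i j k t = - T i j t k := by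
  intro i j k t
  calc T i j k t = T k t i j := hp i j k t
    _ = - T t k i j := ha k t i j
    _ = - T i j t k := by rw [hp t k i j]

include ha hp in
lemma lemH :
    (∑ a, ∑ b, ∑ c, ∑ d, T a b c d * T a d b c)
      = -(∑ a, ∑ b, ∑ c, ∑ d, T a b c d * T a c b d) := by
  rw [sCD (fun a b c d => T a b c d * T a d b c)]
  rw [← Finset.sum_neg_distrib]
  refine Finset.sum_congr rfl fun a _ => ?_
  rw [← Finset.sum_neg_distrib]
  refine Finset.sum_congr rfl fun b _ => ?_
  rw [← Finset.sum_neg_distrib]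
  refine Finset.sum_congr rfl fun c _ => ?_
  rw [← Finset.sum_neg_distrib]
  refine Finset.sum_congr rfl fun d _ => ?_
  rw [t34 T ha hp a b d c]
  ring

include ha hp hb in
lemma bianchiG :
    inner4 T T = 2 * (∑ a, ∑ b, ∑ c, ∑ d, T a b c d * T a c b d) := by
  have key : inner4 T T
      = (∑ a, ∑ b, ∑ c, ∑ d, T a b c d * T a c b d)
        - (∑ a, ∑ b, ∑ c, ∑ d, T a b c d * T a d b c) := by
    unfold inner4
    rw [← Finset.sum_sub_distrib]
    refine Finset.sum_congr rfl fun a _ => ?_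
    rw [← Finset.sum_sub_distrib]
    refine Finset.sum_congr rfl fun b _ => ?_
    rw [← Finset.sum_sub_distrib]
    refine Finset.sum_congr rfl fun c _ => ?_
    rw [← Finset.sum_sub_distrib]
    refine Finset.sum_congr rfl fun d _ => ?_
    have h1 := hb a b c d
    have h2 := t34 T ha hp a c d b
    -- T a b c d + T a d b c + T a c d b = 0, and T a c d b = - T a c b d
    linear_combination T a b c d * h1 - T a b c d * h2
  rw [lemH T ha hp] at key
  linarith [key]

end Aux2


section Aux3
variable {m : ℕ}

lemma sum4_congr {f g : Fin m → Fin m → Fin m → Fin m → ℝ}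
    (h : ∀ a b c d, f a b c d = g a b c d) :
    (∑ a, ∑ b, ∑ c, ∑ d, f a b c d) = ∑ a, ∑ b, ∑ c, ∑ d, g a b c d :=
  Finset.sum_congr rfl fun a _ => Finset.sum_congr rfl fun b _ =>
    Finset.sum_congr rfl fun c _ => Finset.sum_congr rfl fun d _ => h a b c d

lemma sum4_mulc (f : Fin m → Fin m → Fin m → Fin m → ℝ) (co : ℝ) :
    (∑ a, ∑ b, ∑ c, ∑ d, f a b c d * co) = (∑ a, ∑ b, ∑ c, ∑ d, f a b c d) * co := by
  simp only [Finset.sum_mul]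

lemma N_c (T : Fin m → Fin m → Fin m → Fin m → ℝ) {co : ℝ} :
    (∑ a, ∑ b, ∑ c, ∑ d, T a b c d * T a b c d * co) = inner4 T T * co := by
  rw [sum4_mulc (fun a b c d => T a b c d * T a b c d) co]; rfl

lemma G1_c (T : Fin m → Fin m → Fin m → Fin m → ℝ) {co : ℝ} :
    (∑ a, ∑ b, ∑ c, ∑ d, T a b c d * T a c b d * co)
      = (∑ a, ∑ b, ∑ c, ∑ d, T a b c d * T a c b d) * co :=
  sum4_mulc (fun a b c d => T a b c d * T a c b d) co

lemma G2_c (T : Fin m → Fin m → Fin m → Fin m → ℝ)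
    (ha : ∀ i j k t, T i j k t = - T j i k t)
    (hp : ∀ i j k t, T i j k t = T k t i j) {co : ℝ} :
    (∑ a, ∑ b, ∑ c, ∑ d, T a b c d * T a d c b * co)
      = (∑ a, ∑ b, ∑ c, ∑ d, T a b c d * T a c b d) * co := by
  calc (∑ a, ∑ b, ∑ c, ∑ d, T a b c d * T a d c b * co)
      = ∑ a, ∑ b, ∑ c, ∑ d, T a b c d * T a d b c * (-co) :=
        sum4_congr (fun a b c d => by rw [t34 T ha hp a d c b]; ring)
    _ = ∑ a, ∑ b, ∑ c, ∑ d, T a b d c * T a c b d * (-co) :=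
        sCD (fun a b c d => T a b c d * T a d b c * (-co))
    _ = ∑ a, ∑ b, ∑ c, ∑ d, T a b c d * T a c b d * co :=
        sum4_congr (fun a b c d => by rw [t34 T ha hp a b d c]; ring)
    _ = (∑ a, ∑ b, ∑ c, ∑ d, T a b c d * T a c b d) * co := G1_c T

lemma R2_c (T : Fin m → Fin m → Fin m → Fin m → ℝ) {co : ℝ} :
    (∑ a, ∑ b, ∑ c, ∑ d, T c a c b * T d a d b * co) = inner2 (ric T) (ric T) * co := by
  rw [sum4_mulc (fun a b c d => T c a c b * T d a d b) co, R2_canon T]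

lemma hz1 (T : Fin m → Fin m → Fin m → Fin m → ℝ)
    (ha : ∀ i j k t, T i j k t = - T j i k t) :
    ∀ i k t, T i i k t = 0 := fun i k t => by have := ha i i k t; linarith

lemma hz2 (T : Fin m → Fin m → Fin m → Fin m → ℝ)
    (ha : ∀ i j k t, T i j k t = - T j i k t)
    (hp : ∀ i j k t, T i j k t = T k t i j) :
    ∀ i j k, T i j k k = 0 := fun i j k => by have := t34 T ha hp i j k k; linarith

end Aux3

section Atoms
variable {m : ℕ}

lemma valA1 (T : Fin m → Fin m → Fin m → Fin m → ℝ)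
    (ha : ∀ i j k t, T i j k t = - T j i k t)
    (hp : ∀ i j k t, T i j k t = T k t i j) :
    (∑ a, ∑ b, ∑ c, ∑ d, T d a b c * T a d b c * (1 / 2)) = inner4 T T * (-(1 / 2)) := by
  calc (∑ a, ∑ b, ∑ c, ∑ d, T d a b c * T a d b c * (1 / 2))
      = ∑ a, ∑ b, ∑ c, ∑ d, T d a b c * T d a b c * (-(1 / 2)) := sum4_congr (fun a b c d => by rw [ha a d b c]; ring)
    _ = ∑ a, ∑ b, ∑ c, ∑ d, T c a b d * T c a b d * (-(1 / 2)) := sCD (fun a b c d => T d a b c * T d a b c * (-(1 / 2)))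
    _ = ∑ a, ∑ b, ∑ c, ∑ d, T b a c d * T b a c d * (-(1 / 2)) := sBC (fun a b c d => T c a b d * T c a b d * (-(1 / 2)))
    _ = ∑ a, ∑ b, ∑ c, ∑ d, T a b c d * T a b c d * (-(1 / 2)) := sAB (fun a b c d => T b a c d * T b a c d * (-(1 / 2)))
    _ = inner4 T T * (-(1 / 2)) := N_c T

lemma valA2 (T : Fin m → Fin m → Fin m → Fin m → ℝ)
    (ha : ∀ i j k t, T i j k t = - T j i k t)
    (hp : ∀ i j k t, T i j k t = T k t i j) :
    (∑ a, ∑ b, ∑ c, ∑ d, T d b a c * T a b d c * (1 / 2)) = (∑ a, ∑ b, ∑ c, ∑ d, T a b c d * T a c b d) * (1 / 2) := by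
  calc (∑ a, ∑ b, ∑ c, ∑ d, T d b a c * T a b d c * (1 / 2))
      = ∑ a, ∑ b, ∑ c, ∑ d, T a b d c * T a c d b * (1 / 2) := sum4_congr (fun a b c d => by rw [hp d b a c]; ring)
    _ = ∑ a, ∑ b, ∑ c, ∑ d, T a b c d * T a d c b * (1 / 2) := sCD (fun a b c d => T a b d c * T a c d b * (1 / 2))
    _ = (∑ a, ∑ b, ∑ c, ∑ d, T a b c d * T a c b d) * (1 / 2) := G2_c T ha hp

lemma valA3 (T : Fin m → Fin m → Fin m → Fin m → ℝ)
    (ha : ∀ i j k t, T i j k t = - T j i k t)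
    (hp : ∀ i j k t, T i j k t = T k t i j) :
    (∑ a, ∑ b, ∑ c, ∑ d, T d b c a * T a b c d * (1 / 2)) = (∑ a, ∑ b, ∑ c, ∑ d, T a b c d * T a c b d) * (1 / 2) := by
  calc (∑ a, ∑ b, ∑ c, ∑ d, T d b c a * T a b c d * (1 / 2))
      = ∑ a, ∑ b, ∑ c, ∑ d, T a b c d * T a c b d * (1 / 2) := sum4_congr (fun a b c d => by rw [hp d b c a, ha c a d b, t34 T ha hp a c d b]; ring)
    _ = (∑ a, ∑ b, ∑ c, ∑ d, T a b c d * T a c b d) * (1 / 2) := G1_c T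

lemma valA4 (T : Fin m → Fin m → Fin m → Fin m → ℝ)
    (ha : ∀ i j k t, T i j k t = - T j i k t)
    (hp : ∀ i j k t, T i j k t = T k t i j) :
    (∑ a, ∑ b, ∑ c, ∑ d, T a b c d * T a b c d * (-1 / 2)) = inner4 T T * (-(1 / 2)) := by
  calc (∑ a, ∑ b, ∑ c, ∑ d, T a b c d * T a b c d * (-1 / 2))
      = ∑ a, ∑ b, ∑ c, ∑ d, T a b c d * T a b c d * (-(1 / 2)) := sum4_congr (fun a b c d => by ring)
    _ = inner4 T T * (-(1 / 2)) := N_c T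

lemma valA6 (T : Fin m → Fin m → Fin m → Fin m → ℝ)
    (ha : ∀ i j k t, T i j k t = - T j i k t)
    (hp : ∀ i j k t, T i j k t = T k t i j) :
    (∑ a, ∑ b, ∑ c, ∑ d, T c b c d * T a b a d * (-1 / 2)) = inner2 (ric T) (ric T) * (-(1 / 2)) := by
  calc (∑ a, ∑ b, ∑ c, ∑ d, T c b c d * T a b a d * (-1 / 2))
      = ∑ a, ∑ b, ∑ c, ∑ d, T c b c d * T a b a d * (-(1 / 2)) := sum4_congr (fun a b c d => by ring)
    _ = ∑ a, ∑ b, ∑ c, ∑ d, T c a c d * T b a b d * (-(1 / 2)) := sAB (fun a b c d => T c b c d * T a b a d * (-(1 / 2)))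
    _ = ∑ a, ∑ b, ∑ c, ∑ d, T b a b d * T c a c d * (-(1 / 2)) := sBC (fun a b c d => T c a c d * T b a b d * (-(1 / 2)))
    _ = ∑ a, ∑ b, ∑ c, ∑ d, T b a b c * T d a d c * (-(1 / 2)) := sCD (fun a b c d => T b a b d * T c a c d * (-(1 / 2)))
    _ = ∑ a, ∑ b, ∑ c, ∑ d, T c a c b * T d a d b * (-(1 / 2)) := sBC (fun a b c d => T b a b c * T d a d c * (-(1 / 2)))
    _ = inner2 (ric T) (ric T) * (-(1 / 2)) := R2_c T

lemma valA7 (T : Fin m → Fin m → Fin m → Fin m → ℝ)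
    (ha : ∀ i j k t, T i j k t = - T j i k t)
    (hp : ∀ i j k t, T i j k t = T k t i j) :
    (∑ a, ∑ b, ∑ c, ∑ d, T d b c d * T a b c a * (-1 / 2)) = inner2 (ric T) (ric T) * (-(1 / 2)) := by
  calc (∑ a, ∑ b, ∑ c, ∑ d, T d b c d * T a b c a * (-1 / 2))
      = ∑ a, ∑ b, ∑ c, ∑ d, T d b d c * T a b a c * (-(1 / 2)) := sum4_congr (fun a b c d => by rw [t34 T ha hp d b c d, t34 T ha hp a b c a]; ring)
    _ = ∑ a, ∑ b, ∑ c, ∑ d, T d a d c * T b a b c * (-(1 / 2)) := sAB (fun a b c d => T d b d c * T a b a c * (-(1 / 2)))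
    _ = ∑ a, ∑ b, ∑ c, ∑ d, T d a d b * T c a c b * (-(1 / 2)) := sBC (fun a b c d => T d a d c * T b a b c * (-(1 / 2)))
    _ = ∑ a, ∑ b, ∑ c, ∑ d, T c a c b * T d a d b * (-(1 / 2)) := sCD (fun a b c d => T d a d b * T c a c b * (-(1 / 2)))
    _ = inner2 (ric T) (ric T) * (-(1 / 2)) := R2_c T

lemma valB2 (T : Fin m → Fin m → Fin m → Fin m → ℝ)
    (ha : ∀ i j k t, T i j k t = - T j i k t)
    (hp : ∀ i j k t, T i j k t = T k t i j) :
    (∑ a, ∑ b, ∑ c, ∑ d, T a d b c * T a b d c * (1 / 2)) = (∑ a, ∑ b, ∑ c, ∑ d, T a b c d * T a c b d) * (1 / 2) := by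
  calc (∑ a, ∑ b, ∑ c, ∑ d, T a d b c * T a b d c * (1 / 2))
      = ∑ a, ∑ b, ∑ c, ∑ d, T a d b c * T a b d c * (1 / 2) := sum4_congr (fun a b c d => by ring)
    _ = ∑ a, ∑ b, ∑ c, ∑ d, T a c b d * T a b c d * (1 / 2) := sCD (fun a b c d => T a d b c * T a b d c * (1 / 2))
    _ = ∑ a, ∑ b, ∑ c, ∑ d, T a b c d * T a c b d * (1 / 2) := sBC (fun a b c d => T a c b d * T a b c d * (1 / 2))
    _ = (∑ a, ∑ b, ∑ c, ∑ d, T a b c d * T a c b d) * (1 / 2) := G1_c T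

lemma valB3 (T : Fin m → Fin m → Fin m → Fin m → ℝ)
    (ha : ∀ i j k t, T i j k t = - T j i k t)
    (hp : ∀ i j k t, T i j k t = T k t i j) :
    (∑ a, ∑ b, ∑ c, ∑ d, T a d c b * T a b c d * (1 / 2)) = (∑ a, ∑ b, ∑ c, ∑ d, T a b c d * T a c b d) * (1 / 2) := by
  calc (∑ a, ∑ b, ∑ c, ∑ d, T a d c b * T a b c d * (1 / 2))
      = ∑ a, ∑ b, ∑ c, ∑ d, T a d c b * T a b c d * (1 / 2) := sum4_congr (fun a b c d => by ring)
    _ = ∑ a, ∑ b, ∑ c, ∑ d, T a d b c * T a c b d * (1 / 2) := sBC (fun a b c d => T a d c b * T a b c d * (1 / 2))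
    _ = ∑ a, ∑ b, ∑ c, ∑ d, T a c b d * T a d b c * (1 / 2) := sCD (fun a b c d => T a d b c * T a c b d * (1 / 2))
    _ = ∑ a, ∑ b, ∑ c, ∑ d, T a b c d * T a d c b * (1 / 2) := sBC (fun a b c d => T a c b d * T a d b c * (1 / 2))
    _ = (∑ a, ∑ b, ∑ c, ∑ d, T a b c d * T a c b d) * (1 / 2) := G2_c T ha hp

lemma valB6 (T : Fin m → Fin m → Fin m → Fin m → ℝ)
    (ha : ∀ i j k t, T i j k t = - T j i k t)
    (hp : ∀ i j k t, T i j k t = T k t i j) :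
    (∑ a, ∑ b, ∑ c, ∑ d, T a c c d * T a b b d * (-1 / 2)) = inner2 (ric T) (ric T) * (-(1 / 2)) := by
  calc (∑ a, ∑ b, ∑ c, ∑ d, T a c c d * T a b b d * (-1 / 2))
      = ∑ a, ∑ b, ∑ c, ∑ d, T c a c d * T b a b d * (-(1 / 2)) := sum4_congr (fun a b c d => by rw [ha a c c d, ha a b b d]; ring)
    _ = ∑ a, ∑ b, ∑ c, ∑ d, T b a b d * T c a c d * (-(1 / 2)) := sBC (fun a b c d => T c a c d * T b a b d * (-(1 / 2)))
    _ = ∑ a, ∑ b, ∑ c, ∑ d, T b a b c * T d a d c * (-(1 / 2)) := sCD (fun a b c d => T b a b d * T c a c d * (-(1 / 2)))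
    _ = ∑ a, ∑ b, ∑ c, ∑ d, T c a c b * T d a d b * (-(1 / 2)) := sBC (fun a b c d => T b a b c * T d a d c * (-(1 / 2)))
    _ = inner2 (ric T) (ric T) * (-(1 / 2)) := R2_c T

lemma valB7 (T : Fin m → Fin m → Fin m → Fin m → ℝ)
    (ha : ∀ i j k t, T i j k t = - T j i k t)
    (hp : ∀ i j k t, T i j k t = T k t i j) :
    (∑ a, ∑ b, ∑ c, ∑ d, T a d c d * T a b c b * (-1 / 2)) = inner2 (ric T) (ric T) * (-(1 / 2)) := by
  calc (∑ a, ∑ b, ∑ c, ∑ d, T a d c d * T a b c b * (-1 / 2))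
      = ∑ a, ∑ b, ∑ c, ∑ d, T d a d c * T b a b c * (-(1 / 2)) := sum4_congr (fun a b c d => by rw [ha a d c d, t34 T ha hp d a c d, ha a b c b, t34 T ha hp b a c b]; ring)
    _ = ∑ a, ∑ b, ∑ c, ∑ d, T d a d b * T c a c b * (-(1 / 2)) := sBC (fun a b c d => T d a d c * T b a b c * (-(1 / 2)))
    _ = ∑ a, ∑ b, ∑ c, ∑ d, T c a c b * T d a d b * (-(1 / 2)) := sCD (fun a b c d => T d a d b * T c a c b * (-(1 / 2)))
    _ = inner2 (ric T) (ric T) * (-(1 / 2)) := R2_c T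

lemma valC3 (T : Fin m → Fin m → Fin m → Fin m → ℝ)
    (ha : ∀ i j k t, T i j k t = - T j i k t)
    (hp : ∀ i j k t, T i j k t = T k t i j) :
    (∑ a, ∑ b, ∑ c, ∑ d, T a b d c * T a b c d * (1 / 2)) = inner4 T T * (-(1 / 2)) := by
  calc (∑ a, ∑ b, ∑ c, ∑ d, T a b d c * T a b c d * (1 / 2))
      = ∑ a, ∑ b, ∑ c, ∑ d, T a b c d * T a b c d * (-(1 / 2)) := sum4_congr (fun a b c d => by rw [t34 T ha hp a b d c]; ring)
    _ = inner4 T T * (-(1 / 2)) := N_c T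

lemma valC4 (T : Fin m → Fin m → Fin m → Fin m → ℝ)
    (ha : ∀ i j k t, T i j k t = - T j i k t)
    (hp : ∀ i j k t, T i j k t = T k t i j) :
    (∑ a, ∑ b, ∑ c, ∑ d, T a b a d * T c b c d * (-1 / 2)) = inner2 (ric T) (ric T) * (-(1 / 2)) := by
  calc (∑ a, ∑ b, ∑ c, ∑ d, T a b a d * T c b c d * (-1 / 2))
      = ∑ a, ∑ b, ∑ c, ∑ d, T a b a d * T c b c d * (-(1 / 2)) := sum4_congr (fun a b c d => by ring)
    _ = ∑ a, ∑ b, ∑ c, ∑ d, T b a b d * T c a c d * (-(1 / 2)) := sAB (fun a b c d => T a b a d * T c b c d * (-(1 / 2)))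
    _ = ∑ a, ∑ b, ∑ c, ∑ d, T b a b c * T d a d c * (-(1 / 2)) := sCD (fun a b c d => T b a b d * T c a c d * (-(1 / 2)))
    _ = ∑ a, ∑ b, ∑ c, ∑ d, T c a c b * T d a d b * (-(1 / 2)) := sBC (fun a b c d => T b a b c * T d a d c * (-(1 / 2)))
    _ = inner2 (ric T) (ric T) * (-(1 / 2)) := R2_c T

lemma valC5 (T : Fin m → Fin m → Fin m → Fin m → ℝ)
    (ha : ∀ i j k t, T i j k t = - T j i k t)
    (hp : ∀ i j k t, T i j k t = T k t i j) :
    (∑ a, ∑ b, ∑ c, ∑ d, T a b b d * T a c c d * (-1 / 2)) = inner2 (ric T) (ric T) * (-(1 / 2)) := by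
  calc (∑ a, ∑ b, ∑ c, ∑ d, T a b b d * T a c c d * (-1 / 2))
      = ∑ a, ∑ b, ∑ c, ∑ d, T b a b d * T c a c d * (-(1 / 2)) := sum4_congr (fun a b c d => by rw [ha a b b d, ha a c c d]; ring)
    _ = ∑ a, ∑ b, ∑ c, ∑ d, T b a b c * T d a d c * (-(1 / 2)) := sCD (fun a b c d => T b a b d * T c a c d * (-(1 / 2)))
    _ = ∑ a, ∑ b, ∑ c, ∑ d, T c a c b * T d a d b * (-(1 / 2)) := sBC (fun a b c d => T b a b c * T d a d c * (-(1 / 2)))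
    _ = inner2 (ric T) (ric T) * (-(1 / 2)) := R2_c T

lemma valD4 (T : Fin m → Fin m → Fin m → Fin m → ℝ)
    (ha : ∀ i j k t, T i j k t = - T j i k t)
    (hp : ∀ i j k t, T i j k t = T k t i j) :
    (∑ a, ∑ b, ∑ c, ∑ d, T a b c a * T d b c d * (-1 / 2)) = inner2 (ric T) (ric T) * (-(1 / 2)) := by
  calc (∑ a, ∑ b, ∑ c, ∑ d, T a b c a * T d b c d * (-1 / 2))
      = ∑ a, ∑ b, ∑ c, ∑ d, T a b a c * T d b d c * (-(1 / 2)) := sum4_congr (fun a b c d => by rw [t34 T ha hp a b c a, t34 T ha hp d b c d]; ring)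
    _ = ∑ a, ∑ b, ∑ c, ∑ d, T b a b c * T d a d c * (-(1 / 2)) := sAB (fun a b c d => T a b a c * T d b d c * (-(1 / 2)))
    _ = ∑ a, ∑ b, ∑ c, ∑ d, T c a c b * T d a d b * (-(1 / 2)) := sBC (fun a b c d => T b a b c * T d a d c * (-(1 / 2)))
    _ = inner2 (ric T) (ric T) * (-(1 / 2)) := R2_c T

lemma valD5 (T : Fin m → Fin m → Fin m → Fin m → ℝ)
    (ha : ∀ i j k t, T i j k t = - T j i k t)
    (hp : ∀ i j k t, T i j k t = T k t i j) :
    (∑ a, ∑ b, ∑ c, ∑ d, T a b c b * T a d c d * (-1 / 2)) = inner2 (ric T) (ric T) * (-(1 / 2)) := by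
  calc (∑ a, ∑ b, ∑ c, ∑ d, T a b c b * T a d c d * (-1 / 2))
      = ∑ a, ∑ b, ∑ c, ∑ d, T b a b c * T d a d c * (-(1 / 2)) := sum4_congr (fun a b c d => by rw [ha a b c b, t34 T ha hp b a c b, ha a d c d, t34 T ha hp d a c d]; ring)
    _ = ∑ a, ∑ b, ∑ c, ∑ d, T c a c b * T d a d b * (-(1 / 2)) := sBC (fun a b c d => T b a b c * T d a d c * (-(1 / 2)))
    _ = inner2 (ric T) (ric T) * (-(1 / 2)) := R2_c T


end Atoms
section MZero
variable {m : ℕ}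

lemma valA5 (T : Fin m → Fin m → Fin m → Fin m → ℝ)
    (ha : ∀ i j k t, T i j k t = - T j i k t) :
    (∑ a : Fin m, ∑ b, ∑ c, ∑ d, T b b c d * T a a c d * (-1 / 2)) = 0 := by
  calc (∑ a : Fin m, ∑ b, ∑ c, ∑ d, T b b c d * T a a c d * (-1 / 2))
      = ∑ a : Fin m, ∑ b, ∑ c, ∑ d, (0:ℝ) :=
        sum4_congr (fun a b c d => by rw [hz1 T ha b c d]; ring)
    _ = 0 := by simp

lemma valB4 (T : Fin m → Fin m → Fin m → Fin m → ℝ)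
    (ha : ∀ i j k t, T i j k t = - T j i k t) :
    (∑ a : Fin m, ∑ b, ∑ c, ∑ d, T a a c d * T b b c d * (-1 / 2)) = 0 := by
  calc (∑ a : Fin m, ∑ b, ∑ c, ∑ d, T a a c d * T b b c d * (-1 / 2))
      = ∑ a : Fin m, ∑ b, ∑ c, ∑ d, (0:ℝ) :=
        sum4_congr (fun a b c d => by rw [hz1 T ha a c d]; ring)
    _ = 0 := by simp

lemma valC7 (T : Fin m → Fin m → Fin m → Fin m → ℝ)
    (ha : ∀ i j k t, T i j k t = - T j i k t)
    (hp : ∀ i j k t, T i j k t = T k t i j) :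
    (∑ a : Fin m, ∑ b, ∑ c, ∑ d, T a b d d * T a b c c * (-1 / 2)) = 0 := by
  calc (∑ a : Fin m, ∑ b, ∑ c, ∑ d, T a b d d * T a b c c * (-1 / 2))
      = ∑ a : Fin m, ∑ b, ∑ c, ∑ d, (0:ℝ) :=
        sum4_congr (fun a b c d => by rw [hz2 T ha hp a b d]; ring)
    _ = 0 := by simp

lemma valD6 (T : Fin m → Fin m → Fin m → Fin m → ℝ)
    (ha : ∀ i j k t, T i j k t = - T j i k t)
    (hp : ∀ i j k t, T i j k t = T k t i j) :
    (∑ a : Fin m, ∑ b, ∑ c, ∑ d, T a b c c * T a b d d * (-1 / 2)) = 0 := by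
  calc (∑ a : Fin m, ∑ b, ∑ c, ∑ d, T a b c c * T a b d d * (-1 / 2))
      = ∑ a : Fin m, ∑ b, ∑ c, ∑ d, (0:ℝ) :=
        sum4_congr (fun a b c d => by rw [hz2 T ha hp a b c]; ring)
    _ = 0 := by simp

lemma valA8 (T : Fin m → Fin m → Fin m → Fin m → ℝ) :
    (∑ _e : Fin m, ∑ a, ∑ b, ∑ c, ∑ d, T d a b c ^ 2 * (1 / 2))
      = (m : ℝ) * (inner4 T T * (1 / 2)) := by
  simp only [Finset.sum_const, Finset.card_univ, Fintype.card_fin, nsmul_eq_mul]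
  congr 1
  calc (∑ a : Fin m, ∑ b, ∑ c, ∑ d, T d a b c ^ 2 * (1 / 2))
      = ∑ a : Fin m, ∑ b, ∑ c, ∑ d, T d a b c * T d a b c * (1 / 2) :=
        sum4_congr (fun a b c d => by ring)
    _ = ∑ a : Fin m, ∑ b, ∑ c, ∑ d, T c a b d * T c a b d * (1 / 2) :=
        sCD (fun a b c d => T d a b c * T d a b c * (1 / 2))
    _ = ∑ a : Fin m, ∑ b, ∑ c, ∑ d, T b a c d * T b a c d * (1 / 2) :=
        sBC (fun a b c d => T c a b d * T c a b d * (1 / 2))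
    _ = ∑ a : Fin m, ∑ b, ∑ c, ∑ d, T a b c d * T a b c d * (1 / 2) :=
        sAB (fun a b c d => T b a c d * T b a c d * (1 / 2))
    _ = inner4 T T * (1 / 2) := N_c T

lemma valB8 (T : Fin m → Fin m → Fin m → Fin m → ℝ) :
    (∑ a : Fin m, ∑ _e : Fin m, ∑ b, ∑ c, ∑ d, T a d b c ^ 2 * (1 / 2))
      = (m : ℝ) * (inner4 T T * (1 / 2)) := by
  simp only [Finset.sum_const, Finset.card_univ, Fintype.card_fin, nsmul_eq_mul,
    ← Finset.mul_sum]
  congr 1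
  calc (∑ a : Fin m, ∑ b, ∑ c, ∑ d, T a d b c ^ 2 * (1 / 2))
      = ∑ a : Fin m, ∑ b, ∑ c, ∑ d, T a d b c * T a d b c * (1 / 2) :=
        sum4_congr (fun a b c d => by ring)
    _ = ∑ a : Fin m, ∑ b, ∑ c, ∑ d, T a c b d * T a c b d * (1 / 2) :=
        sCD (fun a b c d => T a d b c * T a d b c * (1 / 2))
    _ = ∑ a : Fin m, ∑ b, ∑ c, ∑ d, T a b c d * T a b c d * (1 / 2) :=
        sBC (fun a b c d => T a c b d * T a c b d * (1 / 2))
    _ = inner4 T T * (1 / 2) := N_c T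

lemma valC8 (T : Fin m → Fin m → Fin m → Fin m → ℝ) :
    (∑ a : Fin m, ∑ b, ∑ _e : Fin m, ∑ c, ∑ d, T a b d c ^ 2 * (1 / 2))
      = (m : ℝ) * (inner4 T T * (1 / 2)) := by
  simp only [Finset.sum_const, Finset.card_univ, Fintype.card_fin, nsmul_eq_mul,
    ← Finset.mul_sum]
  congr 1
  calc (∑ a : Fin m, ∑ b, ∑ c, ∑ d, T a b d c ^ 2 * (1 / 2))
      = ∑ a : Fin m, ∑ b, ∑ c, ∑ d, T a b d c * T a b d c * (1 / 2) :=
        sum4_congr (fun a b c d => by ring)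
    _ = ∑ a : Fin m, ∑ b, ∑ c, ∑ d, T a b c d * T a b c d * (1 / 2) :=
        sCD (fun a b c d => T a b d c * T a b d c * (1 / 2))
    _ = inner4 T T * (1 / 2) := N_c T

lemma valD8 (T : Fin m → Fin m → Fin m → Fin m → ℝ) :
    (∑ a : Fin m, ∑ b, ∑ c, ∑ _e : Fin m, ∑ d, T a b c d ^ 2 * (1 / 2))
      = (m : ℝ) * (inner4 T T * (1 / 2)) := by
  simp only [Finset.sum_const, Finset.card_univ, Fintype.card_fin, nsmul_eq_mul,
    ← Finset.mul_sum]
  congr 1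
  calc (∑ a : Fin m, ∑ b, ∑ c, ∑ d, T a b c d ^ 2 * (1 / 2))
      = ∑ a : Fin m, ∑ b, ∑ c, ∑ d, T a b c d * T a b c d * (1 / 2) :=
        sum4_congr (fun a b c d => by ring)
    _ = inner4 T T * (1 / 2) := N_c T

end MZero
section StepA
variable {m : ℕ}

lemma stepA (T : Fin m → Fin m → Fin m → Fin m → ℝ) :
    inner6 (hat4 T) (hat4 T)
      = ∑ i, ∑ j, ∑ k, ∑ t, ∑ s, (hat4 T i j k t s i * T s j k t
          + hat4 T i j k t s j * T i s k t + hat4 T i j k t s k * T i j s t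
          + hat4 T i j k t s t * T i j k s) := by
  unfold inner6
  refine Finset.sum_congr rfl fun i _ => Finset.sum_congr rfl fun j _ =>
    Finset.sum_congr rfl fun k _ => Finset.sum_congr rfl fun t _ => ?_
  have hswap : ∀ s r, hat4 T i j k t s r = - hat4 T i j k t r s := by
    intro s r; unfold hat4; ring
  have hdecomp : ∀ s r : Fin m, hat4 T i j k t s r * hat4 T i j k t s r
      = (1/2) * (hat4 T i j k t s r *
          (T s j k t * delta i r + T i s k t * delta j r + T i j s t * delta k r
            + T i j k s * delta t r))
        - (1/2) * (hat4 T i j k t s r *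
          (T r j k t * delta i s + T i r k t * delta j s + T i j r t * delta k s
            + T i j k r * delta t s)) := by
    intro s r
    have h : hat4 T i j k t s r
        = (1/2) * ((T s j k t * delta i r + T i s k t * delta j r + T i j s t * delta k r
            + T i j k s * delta t r)
          - (T r j k t * delta i s + T i r k t * delta j s + T i j r t * delta k s
            + T i j k r * delta t s)) := by
      unfold hat4; ring
    nth_rewrite 2 [h]
    ring
  have flip : (∑ s, ∑ r, (1/2) * (hat4 T i j k t s r *
          (T r j k t * delta i s + T i r k t * delta j s + T i j r t * delta k s
            + T i j k r * delta t s)))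
      = - ∑ s, ∑ r, (1/2) * (hat4 T i j k t s r *
          (T s j k t * delta i r + T i s k t * delta j r + T i j s t * delta k r
            + T i j k s * delta t r)) := by
    rw [Finset.sum_comm, ← Finset.sum_neg_distrib]
    refine Finset.sum_congr rfl fun s _ => ?_
    rw [← Finset.sum_neg_distrib]
    refine Finset.sum_congr rfl fun r _ => ?_
    rw [hswap r s]; ring
  calc (∑ s, ∑ r, hat4 T i j k t s r * hat4 T i j k t s r)
      = (∑ s, ∑ r, (1/2) * (hat4 T i j k t s r *
          (T s j k t * delta i r + T i s k t * delta j r + T i j s t * delta k r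
            + T i j k s * delta t r)))
        - (∑ s, ∑ r, (1/2) * (hat4 T i j k t s r *
          (T r j k t * delta i s + T i r k t * delta j s + T i j r t * delta k s
            + T i j k r * delta t s))) := by
        simp only [hdecomp, Finset.sum_sub_distrib]
    _ = ∑ s, ∑ r, hat4 T i j k t s r *
          (T s j k t * delta i r + T i s k t * delta j r + T i j s t * delta k r
            + T i j k s * delta t r) := by
        rw [flip, sub_neg_eq_add, ← Finset.sum_add_distrib]
        refine Finset.sum_congr rfl fun s _ => ?_
        rw [← Finset.sum_add_distrib]
        refine Finset.sum_congr rfl fun r _ => ?_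
        ring
    _ = ∑ s, (hat4 T i j k t s i * T s j k t + hat4 T i j k t s j * T i s k t
          + hat4 T i j k t s k * T i j s t + hat4 T i j k t s t * T i j k s) := by
        refine Finset.sum_congr rfl fun s _ => ?_
        simp [delta, mul_add, mul_ite, mul_one, mul_zero, Finset.sum_add_distrib,
          Finset.sum_ite_eq, Finset.sum_ite_eq']

end StepA
section ValF
variable {m : ℕ}

set_option maxHeartbeats 1000000 in
lemma valF1 (T : Fin m → Fin m → Fin m → Fin m → ℝ)
    (ha : ∀ i j k t, T i j k t = - T j i k t)
    (hp : ∀ i j k t, T i j k t = T k t i j) :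
    (∑ i, ∑ j, ∑ k, ∑ t, ∑ s, hat4 T i j k t s i * T s j k t)
      = (m : ℝ) * (inner4 T T * (1 / 2)) - inner4 T T
        + (∑ a, ∑ b, ∑ c, ∑ d, T a b c d * T a c b d) - inner2 (ric T) (ric T) := by
  simp only [hat4, delta, mul_ite, ite_mul, mul_one, mul_zero, one_mul, zero_mul,
    eq_self_iff_true, if_true]
  ring_nf
  simp only [mul_ite, ite_mul, mul_one, mul_zero, one_mul, zero_mul,
    Finset.sum_add_distrib, Finset.sum_sub_distrib, Finset.sum_const_zero,
    Finset.sum_ite_irrel, Finset.sum_ite_eq, Finset.sum_ite_eq', Finset.mem_univ, if_true]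
  rw [valA1 T ha hp, valA2 T ha hp, valA3 T ha hp, valA4 T ha hp, valA5 T ha,
    valA6 T ha hp, valA7 T ha hp, valA8 T]
  ring

set_option maxHeartbeats 1000000 in
lemma valF2 (T : Fin m → Fin m → Fin m → Fin m → ℝ)
    (ha : ∀ i j k t, T i j k t = - T j i k t)
    (hp : ∀ i j k t, T i j k t = T k t i j) :
    (∑ i, ∑ j, ∑ k, ∑ t, ∑ s, hat4 T i j k t s j * T i s k t)
      = (m : ℝ) * (inner4 T T * (1 / 2)) - inner4 T T
        + (∑ a, ∑ b, ∑ c, ∑ d, T a b c d * T a c b d) - inner2 (ric T) (ric T) := by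
  simp only [hat4, delta, mul_ite, ite_mul, mul_one, mul_zero, one_mul, zero_mul,
    eq_self_iff_true, if_true]
  ring_nf
  simp only [mul_ite, ite_mul, mul_one, mul_zero, one_mul, zero_mul,
    Finset.sum_add_distrib, Finset.sum_sub_distrib, Finset.sum_const_zero,
    Finset.sum_ite_irrel, Finset.sum_ite_eq, Finset.sum_ite_eq', Finset.mem_univ, if_true]
  rw [valA1 T ha hp,
    valB2 T ha hp,
    valB3 T ha hp,
    valB4 T ha,
    valA4 T ha hp,
    valB6 T ha hp,
    valB7 T ha hp,
    valB8 T]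
  ring


set_option maxHeartbeats 1000000 in
lemma valF3 (T : Fin m → Fin m → Fin m → Fin m → ℝ)
    (ha : ∀ i j k t, T i j k t = - T j i k t)
    (hp : ∀ i j k t, T i j k t = T k t i j) :
    (∑ i, ∑ j, ∑ k, ∑ t, ∑ s, hat4 T i j k t s k * T i j s t)
      = (m : ℝ) * (inner4 T T * (1 / 2)) - inner4 T T
        + (∑ a, ∑ b, ∑ c, ∑ d, T a b c d * T a c b d) - inner2 (ric T) (ric T) := by
  simp only [hat4, delta, mul_ite, ite_mul, mul_one, mul_zero, one_mul, zero_mul,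
    eq_self_iff_true, if_true]
  ring_nf
  simp only [mul_ite, ite_mul, mul_one, mul_zero, one_mul, zero_mul,
    Finset.sum_add_distrib, Finset.sum_sub_distrib, Finset.sum_const_zero,
    Finset.sum_ite_irrel, Finset.sum_ite_eq, Finset.sum_ite_eq', Finset.mem_univ, if_true]
  rw [valA2 T ha hp,
    valB2 T ha hp,
    valC3 T ha hp,
    valC4 T ha hp,
    valC5 T ha hp,
    valA4 T ha hp,
    valC7 T ha hp,
    valC8 T]
  ring


set_option maxHeartbeats 1000000 in
lemma valF4 (T : Fin m → Fin m → Fin m → Fin m → ℝ)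
    (ha : ∀ i j k t, T i j k t = - T j i k t)
    (hp : ∀ i j k t, T i j k t = T k t i j) :
    (∑ i, ∑ j, ∑ k, ∑ t, ∑ s, hat4 T i j k t s t * T i j k s)
      = (m : ℝ) * (inner4 T T * (1 / 2)) - inner4 T T
        + (∑ a, ∑ b, ∑ c, ∑ d, T a b c d * T a c b d) - inner2 (ric T) (ric T) := by
  simp only [hat4, delta, mul_ite, ite_mul, mul_one, mul_zero, one_mul, zero_mul,
    eq_self_iff_true, if_true]
  ring_nf
  simp only [mul_ite, ite_mul, mul_one, mul_zero, one_mul, zero_mul,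
    Finset.sum_add_distrib, Finset.sum_sub_distrib, Finset.sum_const_zero,
    Finset.sum_ite_irrel, Finset.sum_ite_eq, Finset.sum_ite_eq', Finset.mem_univ, if_true]
  rw [valA3 T ha hp,
    valB3 T ha hp,
    valC3 T ha hp,
    valD4 T ha hp,
    valD5 T ha hp,
    valD6 T ha hp,
    valA4 T ha hp,
    valD8 T]
  ring

lemma hat_norm (T : Fin m → Fin m → Fin m → Fin m → ℝ)
    (ha : ∀ i j k t, T i j k t = - T j i k t)
    (hp : ∀ i j k t, T i j k t = T k t i j)
    (hb : ∀ i j k t, T i j k t + T i t j k + T i k t j = 0) :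
    inner6 (hat4 T) (hat4 T)
      = 2 * ((m : ℝ) - 1) * inner4 T T - 4 * inner2 (ric T) (ric T) := by
  rw [stepA T]
  have split : (∑ i, ∑ j, ∑ k, ∑ t, ∑ s, (hat4 T i j k t s i * T s j k t
          + hat4 T i j k t s j * T i s k t + hat4 T i j k t s k * T i j s t
          + hat4 T i j k t s t * T i j k s : ℝ))
      = (∑ i, ∑ j, ∑ k, ∑ t, ∑ s, hat4 T i j k t s i * T s j k t)
        + (∑ i, ∑ j, ∑ k, ∑ t, ∑ s, hat4 T i j k t s j * T i s k t)
        + (∑ i, ∑ j, ∑ k, ∑ t, ∑ s, hat4 T i j k t s k * T i j s t)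
        + (∑ i, ∑ j, ∑ k, ∑ t, ∑ s, hat4 T i j k t s t * T i j k s) := by
    simp only [Finset.sum_add_distrib]
  rw [split, valF1 T ha hp, valF2 T ha hp, valF3 T ha hp, valF4 T ha hp]
  have hG := bianchiG T ha hp hb
  linear_combination (-2 : ℝ) * hG
end ValF
section PP
variable {m : ℕ}

lemma neg_ite (c : Prop) [Decidable c] (x y : ℝ) :
    -(if c then x else y) = if c then -x else -y := by
  split <;> rfl

lemma sum2_mulc (f : Fin m → Fin m → ℝ) (co : ℝ) :
    (∑ a, ∑ b, f a b * co) = (∑ a, ∑ b, f a b) * co := by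
  simp only [Finset.sum_mul]

set_option maxHeartbeats 1000000 in
lemma pproj_norm (T : Fin m → Fin m → Fin m → Fin m → ℝ)
    (ha : ∀ i j k t, T i j k t = - T j i k t)
    (hp : ∀ i j k t, T i j k t = T k t i j)
    (hm1 : (-1 + (m:ℝ)) ≠ 0) :
    inner4 (pproj T) (pproj T)
      = inner4 T T - (2/((m:ℝ)-1)) * inner2 (ric T) (ric T) := by
  have e14 : ∀ b c : Fin m, (∑ x, T x b c x) = -(ric T b c) := by
    intro b c
    calc (∑ x, T x b c x) = ∑ x, -(T x b x c) :=
          Finset.sum_congr rfl fun x _ => t34 T ha hp x b c x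
      _ = -∑ x, T x b x c := by rw [Finset.sum_neg_distrib]
      _ = -(ric T b c) := rfl
  have hP1 : (∑ a : Fin m, ∑ b, ∑ c, -(T a b a c * (-1 + (m:ℝ))⁻¹ * ric T b c * 2))
      = inner2 (ric T) (ric T) * (-(2 * (-1 + (m:ℝ))⁻¹)) := by
    rw [Finset.sum_comm]
    calc (∑ b : Fin m, ∑ a, ∑ c, -(T a b a c * (-1 + (m:ℝ))⁻¹ * ric T b c * 2))
        = ∑ b : Fin m, ∑ c, ∑ a, -(T a b a c * (-1 + (m:ℝ))⁻¹ * ric T b c * 2) :=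
          Finset.sum_congr rfl fun b _ => Finset.sum_comm
      _ = ∑ b : Fin m, ∑ c, ric T b c * ric T b c * (-(2 * (-1 + (m:ℝ))⁻¹)) := by
          refine Finset.sum_congr rfl fun b _ => Finset.sum_congr rfl fun c _ => ?_
          calc (∑ a, -(T a b a c * (-1 + (m:ℝ))⁻¹ * ric T b c * 2))
              = ∑ a, T a b a c * (-((-1 + (m:ℝ))⁻¹ * ric T b c * 2)) :=
                Finset.sum_congr rfl fun a _ => by ring
            _ = (∑ a, T a b a c) * (-((-1 + (m:ℝ))⁻¹ * ric T b c * 2)) := by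
                rw [← Finset.sum_mul]
            _ = ric T b c * ric T b c * (-(2 * (-1 + (m:ℝ))⁻¹)) := by
                rw [show (∑ a, T a b a c) = ric T b c from rfl]; ring
      _ = inner2 (ric T) (ric T) * (-(2 * (-1 + (m:ℝ))⁻¹)) := by
          rw [sum2_mulc (fun b c => ric T b c * ric T b c)]; rfl
  have hP2 : (∑ a : Fin m, ∑ b, ∑ c, T a b c a * (-1 + (m:ℝ))⁻¹ * ric T b c * 2)
      = inner2 (ric T) (ric T) * (-(2 * (-1 + (m:ℝ))⁻¹)) := by
    rw [Finset.sum_comm]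
    calc (∑ b : Fin m, ∑ a, ∑ c, T a b c a * (-1 + (m:ℝ))⁻¹ * ric T b c * 2)
        = ∑ b : Fin m, ∑ c, ∑ a, T a b c a * (-1 + (m:ℝ))⁻¹ * ric T b c * 2 :=
          Finset.sum_congr rfl fun b _ => Finset.sum_comm
      _ = ∑ b : Fin m, ∑ c, ric T b c * ric T b c * (-(2 * (-1 + (m:ℝ))⁻¹)) := by
          refine Finset.sum_congr rfl fun b _ => Finset.sum_congr rfl fun c _ => ?_
          calc (∑ a, T a b c a * (-1 + (m:ℝ))⁻¹ * ric T b c * 2)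
              = ∑ a, T a b c a * ((-1 + (m:ℝ))⁻¹ * ric T b c * 2) :=
                Finset.sum_congr rfl fun a _ => by ring
            _ = (∑ a, T a b c a) * ((-1 + (m:ℝ))⁻¹ * ric T b c * 2) := by
                rw [← Finset.sum_mul]
            _ = ric T b c * ric T b c * (-(2 * (-1 + (m:ℝ))⁻¹)) := by
                rw [e14 b c]; ring
      _ = inner2 (ric T) (ric T) * (-(2 * (-1 + (m:ℝ))⁻¹)) := by
          rw [sum2_mulc (fun b c => ric T b c * ric T b c)]; rfl
  have hP4 : (∑ a : Fin m, ∑ b, (-1 + (m:ℝ))⁻¹ * (-1 + (m:ℝ))⁻¹ * ric T b a * ric T b a * 2)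
      = inner2 (ric T) (ric T) * (2 * ((-1 + (m:ℝ))⁻¹ * (-1 + (m:ℝ))⁻¹)) := by
    rw [Finset.sum_comm]
    calc (∑ b : Fin m, ∑ a, (-1 + (m:ℝ))⁻¹ * (-1 + (m:ℝ))⁻¹ * ric T b a * ric T b a * 2)
        = ∑ b : Fin m, ∑ a, (ric T b a * ric T b a) * (2 * ((-1 + (m:ℝ))⁻¹ * (-1 + (m:ℝ))⁻¹)) :=
          Finset.sum_congr rfl fun b _ => Finset.sum_congr rfl fun a _ => by ring
      _ = inner2 (ric T) (ric T) * (2 * ((-1 + (m:ℝ))⁻¹ * (-1 + (m:ℝ))⁻¹)) := by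
          rw [sum2_mulc (fun b a => ric T b a * ric T b a)]; rfl
  have hP5 : (∑ _e : Fin m, ∑ a : Fin m, ∑ b,
        (-1 + (m:ℝ))⁻¹ * (-1 + (m:ℝ))⁻¹ * (ric T a b * ric T a b))
      = (m:ℝ) * (inner2 (ric T) (ric T) * ((-1 + (m:ℝ))⁻¹ * (-1 + (m:ℝ))⁻¹)) := by
    simp only [Finset.sum_const, Finset.card_univ, Fintype.card_fin, nsmul_eq_mul]
    congr 1
    calc (∑ a : Fin m, ∑ b, (-1 + (m:ℝ))⁻¹ * (-1 + (m:ℝ))⁻¹ * (ric T a b * ric T a b))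
        = ∑ a : Fin m, ∑ b, (ric T a b * ric T a b) * ((-1 + (m:ℝ))⁻¹ * (-1 + (m:ℝ))⁻¹) :=
          Finset.sum_congr rfl fun a _ => Finset.sum_congr rfl fun b _ => by ring
      _ = inner2 (ric T) (ric T) * ((-1 + (m:ℝ))⁻¹ * (-1 + (m:ℝ))⁻¹) := by
          rw [sum2_mulc (fun a b => ric T a b * ric T a b)]; rfl
  unfold inner4 pproj
  simp only [delta, mul_ite, ite_mul, mul_one, mul_zero, one_mul, zero_mul,
    eq_self_iff_true, if_true]
  ring_nf
  simp only [neg_ite, pow_two, neg_zero, mul_ite, ite_mul, mul_one, mul_zero, one_mul, zero_mul,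
    Finset.sum_add_distrib, Finset.sum_sub_distrib, Finset.sum_const_zero,
    Finset.sum_ite_irrel, Finset.sum_ite_eq, Finset.sum_ite_eq', Finset.mem_univ, if_true]
  rw [hP1, hP2, hP4, hP5,
    show (∑ a : Fin m, ∑ b, ∑ c, ∑ d, T a b c d * T a b c d) = inner4 T T from rfl]
  have hmm : ((m:ℝ) - 1) ≠ 0 := by intro h; apply hm1; linarith
  field_simp
  ring
end PP

/-- `|T̂|² = 2(m−1)·|P_T|²`; in particular, if `T` is totally traceless then
`|T̂|² = 2(m−1)·|T|²`. -/
theorem statement8 (m : ℕ) (hm : 3 ≤ m)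
    (T : Fin m → Fin m → Fin m → Fin m → ℝ) (hT : IsACT T) :
    inner6 (hat4 T) (hat4 T) = 2 * ((m : ℝ) - 1) * inner4 (pproj T) (pproj T)
    ∧ ((∀ i j, ric T i j = 0) →
        inner6 (hat4 T) (hat4 T) = 2 * ((m : ℝ) - 1) * inner4 T T) := by
  obtain ⟨ha, hp, hb⟩ := hT
  have hm1 : (-1 + (m:ℝ)) ≠ 0 := by
    have h3 : (3:ℝ) ≤ (m:ℝ) := by exact_mod_cast hm
    intro h; linarith
  have hmm : ((m:ℝ) - 1) ≠ 0 := by intro h; apply hm1; linarith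
  have h1 := hat_norm T ha hp hb
  have h2 := pproj_norm T ha hp hm1
  constructor
  · rw [h1, h2]
    field_simp
    ring
  · intro hric
    have h0 : inner2 (ric T) (ric T) = 0 := by simp [inner2, hric]
    rw [h1, h0]; ring

end

end Paper
end
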